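/- arXiv:1208.3586 — 8 statements merged into one kernel-verified Lean document; each statement's English description precedes it below -/
import Mathlib

section
/- Let $\{\ell(p,q,u)\}$ be a system of *-free creation operators on the free Fock space $\mathcal{F}(\mathcal{H})$ over $\mathcal{H}=\bigoplus_{p,q,u}\mathbb{C}e(p,q,u)$, with $\ell(p,q,u)^*\ell(p,q,u)=b_{p,q}(u)$. Then there is an isometric embedding $\tau: \mathcal{M}\to\mathcal{F}(\mathcal{H})\otimes\mathbb{C}^r$ with $\tau(\Omega_q)=\Omega\otimes e(q)$ and $\tau(e_{p_1,p_2}(u_1)\otimes\cdots\otimes e_{p_n,q}(u_n))= e(p_1,p_2,u_1)\otimes\cdots\otimes e(p_n,q,u_n)\otimes e(p_1)$, satisfying the intertwining relation $\tau\,\wp_{p,q}(u) = (\ell(p,q,u)\otimes e(p,q))\,\tau$ for all $p,q,u$. -/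
open ContinuousLinearMap

/-- Basis-index test for nontrivial action of `℘_{p,q}(u)` (see statement 0). -/
def actsOn {r t : ℕ} (q : Fin r) (x : Fin r × List (Fin r × Fin t)) : Bool :=
  match x.2 with
  | [] => x.1 == q
  | (a, _) :: _ => a == q

/-- The color of the first tensor factor of the basis vector indexed by `x`
(first matricial index of the head letter), or the vacuum color. -/
def headColor {r t : ℕ} (x : Fin r × List (Fin r × Fin t)) : Fin r :=
  match x.2 with
  | [] => x.1
  | (p, _) :: _ => p

def nextColor {r t : ℕ} (q : Fin r) : List (Fin r × Fin t) → Fin r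
  | [] => q
  | (p, _) :: _ => p

/-- The word `((p₁,p₂,u₁),…,(pₘ,q,uₘ))` of free-Fock letters `e(pᵢ,pᵢ₊₁,uᵢ)`
corresponding to the simple tensor `e_{p₁,p₂}(u₁) ⊗ ⋯ ⊗ e_{pₘ,q}(uₘ)`. -/
def toWord {r t : ℕ} (q : Fin r) : List (Fin r × Fin t) → List (Fin r × Fin r × Fin t)
  | [] => []
  | (p, u) :: rest => (p, nextColor q rest, u) :: toWord q rest

/-- Left inverse data for the word encoding. -/
def unWord {r t : ℕ} : List (Fin r × Fin r × Fin t) → Fin r → Fin r × List (Fin r × Fin t)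
  | [], j => (j, [])
  | (p, q, u) :: w, _ => ((unWord w q).1, (p, u) :: (unWord w q).2)

lemma unWord_toWord {r t : ℕ} :
    ∀ (l : List (Fin r × Fin t)) (q : Fin r), unWord (toWord q l) (nextColor q l) = (q, l) := by
  intro l
  induction l with
  | nil => intro q; rfl
  | cons a rest ih =>
    intro q
    obtain ⟨p, u⟩ := a
    simp only [toWord, unWord, ih q]

lemma phi_injective {r t : ℕ} :
    Function.Injective (fun x : Fin r × List (Fin r × Fin t) =>
      (toWord x.1 x.2, headColor x)) := by
  have hleft : ∀ x : Fin r × List (Fin r × Fin t),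
      unWord (toWord x.1 x.2) (headColor x) = x := by
    rintro ⟨a, l⟩
    cases l with
    | nil => rfl
    | cons b rest =>
      obtain ⟨p, u⟩ := b
      show unWord ((p, nextColor a rest, u) :: toWord a rest) p = (a, (p, u) :: rest)
      simp [unWord, unWord_toWord rest a]
  intro x y hxy
  have h1 := congrArg (fun z : List (Fin r × Fin r × Fin t) × Fin r => unWord z.1 z.2) hxy
  simpa [hleft x, hleft y] using h1

lemma headColor_eq_nextColor {r t : ℕ} (x : Fin r × List (Fin r × Fin t)) :
    headColor x = nextColor x.1 x.2 := by
  obtain ⟨a, l⟩ := x; cases l <;> rfl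

lemma actsOn_eq {r t : ℕ} (q : Fin r) (x : Fin r × List (Fin r × Fin t)) :
    actsOn q x = (headColor x == q) := by
  obtain ⟨a, l⟩ := x; cases l <;> rfl

/-- There is an isometric embedding `τ : 𝓜 → 𝓕(𝓗) ⊗ ℂ^r` mapping
`Ω_q ↦ Ω ⊗ e(q)` and `e_{p₁,p₂}(u₁) ⊗ ⋯ ⊗ e_{pₙ,q}(uₙ) ↦
e(p₁,p₂,u₁) ⊗ ⋯ ⊗ e(pₙ,q,uₙ) ⊗ e(p₁)`, intertwining the matricially free creation
operators `℘_{p,q}(u)` with the operators `ℓ(p,q,u) ⊗ e(p,q)`.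
Here the Hilbert space `G` models `𝓕(𝓗) ⊗ ℂ^r` via the orthonormal family `eG`, indexed by
pairs (word of letters, basis index of `ℂ^r`), and `L p q u` models `ℓ(p,q,u) ⊗ e(p,q)`. -/
theorem stmt1 {H G : Type}
    [NormedAddCommGroup H] [InnerProductSpace ℂ H] [CompleteSpace H]
    [NormedAddCommGroup G] [InnerProductSpace ℂ G] [CompleteSpace G]
    (r t : ℕ) (b : Fin r → Fin r → Fin t → ℝ) (hb : ∀ p q u, 0 ≤ b p q u)
    (eM : Fin r × List (Fin r × Fin t) → H) (heM : Orthonormal ℂ eM)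
    (hdense : (Submodule.span ℂ (Set.range eM)).topologicalClosure = ⊤)
    (c : Fin r → Fin r → Fin t → H →L[ℂ] H)
    (hc : ∀ p q u x, c p q u (eM x) =
      if actsOn q x then (Real.sqrt (b p q u) : ℂ) • eM (x.1, (p, u) :: x.2) else 0)
    (eG : List (Fin r × Fin r × Fin t) × Fin r → G) (heG : Orthonormal ℂ eG)
    (L : Fin r → Fin r → Fin t → G →L[ℂ] G)
    (hL : ∀ p q u w j, L p q u (eG (w, j)) =
      if j = q then (Real.sqrt (b p q u) : ℂ) • eG ((p, q, u) :: w, p) else 0) :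
    ∃ τ : H →ₗᵢ[ℂ] G,
      (∀ x, τ (eM x) = eG (toWord x.1 x.2, headColor x)) ∧
      ∀ p q u v, τ (c p q u v) = L p q u (τ v) := by
  classical
  set φ : Fin r × List (Fin r × Fin t) → List (Fin r × Fin r × Fin t) × Fin r :=
    fun x => (toWord x.1 x.2, headColor x) with hφdef
  have hφ : Function.Injective φ := phi_injective
  have hw : Orthonormal ℂ (eG ∘ φ) := heG.comp φ hφ
  let B : HilbertBasis (Fin r × List (Fin r × Fin t)) ℂ H := HilbertBasis.mk heM hdense.ge
  let τ : H →ₗᵢ[ℂ] G := hw.orthogonalFamily.linearIsometry.comp B.repr.toLinearIsometry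
  have hτ : ∀ x, τ (eM x) = eG (φ x) := by
    intro x
    have hx : eM x = B x := (congrFun (HilbertBasis.coe_mk heM hdense.ge) x).symm
    show hw.orthogonalFamily.linearIsometry (B.repr (eM x)) = _
    rw [hx, B.repr_self, OrthogonalFamily.linearIsometry_apply_single,
      LinearIsometry.toSpanSingleton_apply, one_smul]
    rfl
  refine ⟨τ, hτ, ?_⟩
  intro p q u
  have key : ∀ x, τ (c p q u (eM x)) = L p q u (τ (eM x)) := by
    intro x
    rw [hc, hτ]
    have hLx := hL p q u (toWord x.1 x.2) (headColor x)
    rw [show (φ x : List (Fin r × Fin r × Fin t) × Fin r) = (toWord x.1 x.2, headColor x)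
      from rfl, hLx, actsOn_eq]
    by_cases hq : headColor x = q
    · rw [if_pos (by simp [hq]), if_pos hq, map_smul, hτ]
      have : φ (x.1, (p, u) :: x.2) =
          ((p, nextColor x.1 x.2, u) :: toWord x.1 x.2, p) := rfl
      rw [this, ← headColor_eq_nextColor, hq]
    · rw [if_neg (by simp [hq]), if_neg hq, map_zero]
  intro v
  have heq : τ.toContinuousLinearMap.comp (c p q u)
      = (L p q u).comp τ.toContinuousLinearMap := by
    apply ContinuousLinearMap.ext_on
      (Submodule.dense_iff_topologicalClosure_eq_top.mpr hdense)
    rintro _ ⟨x, rfl⟩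
    simpa using key x
  exact congrFun (congrArg (fun f : H →L[ℂ] G => (f : H → G)) heq) v
end

section
/- Let $\omega_{p,q}(u)$, $p,q\in[r]$, $u\in\mathcal{U}$, be matricially free Gaussian operators where $\omega_{p,q}(u)$ has variance $d_p\geq 0$ with $d_1+\cdots+d_r=1$. Set $\wp(u)=\sum_{p,q}\wp_{p,q}(u)$. Then $\wp(u)^*\wp(v)=\delta_{u,v}\,1$, and the operator $\omega(u)=\sum_{p,q=1}^{r}\omega_{p,q}(u)$ has the standard semicircle distribution with respect to the state $\Psi=\sum_q d_q\Psi_q$. -/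
/-!
On basis vectors `℘(u)` acts by `e x ↦ ∑_p √d_p e((p,u)x)`: a sum of mutually orthogonal
vectors of total squared length `∑ d_p = 1`, distinct for distinct `(u, x)`. Hence `℘(u)` is an
isometry, the ranges of different `℘(u)` are orthogonal, and `℘(u)*` kills every vacuum `Ω_q`.

For any isometry `S` and unit vector `Ω` with `S*Ω = 0`, the vectors `SⁿΩ` behave like the
standard basis under the unilateral shift, so `⟨SⁿΩ, (S + S*)ᵐΩ⟩` counts the nonnegative
`±1` lattice paths of length `m` from height `n` down to `0`. For `n = 0` the reflection principle
gives the Catalan number `C_{m/2}`. Each `Ψ_q`, hence their convex combination `Ψ`, therefore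
gives `ω(u)` the semicircle moments.
-/

open ContinuousLinearMap

/-- `pathCount m n` is the number of `±1` lattice paths of length `m` from height `n` to height
`0` that never go below `0`. -/
def pathCount : ℕ → ℕ → ℕ
  | 0, 0 => 1
  | 0, _ + 1 => 0
  | m + 1, 0 => pathCount m 1
  | m + 1, n + 1 => pathCount m (n + 2) + pathCount m n

theorem pathCount_eq_zero_of_odd : ∀ m n, Odd (m + n) → pathCount m n = 0
  | 0, 0, h => absurd h (by decide)
  | 0, _ + 1, _ => rfl
  | m + 1, 0, h => pathCount_eq_zero_of_odd m 1 (by simpa using h)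
  | m + 1, n + 1, h => by
    rw [pathCount, pathCount_eq_zero_of_odd m (n + 2) (by grind),
      pathCount_eq_zero_of_odd m n (by grind)]

theorem pathCount_add_choose : ∀ m n k, m + n = 2 * k →
    pathCount m n + m.choose (k + 1) = m.choose k
  | 0, 0, k, h => by rw [show k = 0 by omega]; rfl
  | 0, n + 1, k, h => by simp [pathCount, Nat.choose_eq_zero_of_lt (by omega : 0 < k)]
  | m + 1, 0, k, h => by
    obtain ⟨j, rfl⟩ : ∃ j, k = j + 1 := ⟨k - 1, by omega⟩
    obtain rfl : m = 2 * j + 1 := by omega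
    have ih := pathCount_add_choose (2 * j + 1) 1 (j + 1) (by omega)
    have hsymm := Nat.choose_symm_half j
    rw [pathCount, Nat.choose_succ_succ' (2 * j + 1) (j + 1), Nat.choose_succ_succ' (2 * j + 1) j]
    omega
  | m + 1, n + 1, k, h => by
    obtain ⟨j, rfl⟩ : ∃ j, k = j + 1 := ⟨k - 1, by omega⟩
    have ih₁ := pathCount_add_choose m (n + 2) (j + 1) (by omega)
    have ih₂ := pathCount_add_choose m n j (by omega)
    rw [pathCount, Nat.choose_succ_succ' m (j + 1), Nat.choose_succ_succ' m j]
    omega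

theorem pathCount_two_mul_zero (k : ℕ) : pathCount (2 * k) 0 = catalan k := by
  have hsum := pathCount_add_choose (2 * k) 0 k rfl
  have hratio := Nat.choose_succ_right_eq (2 * k) k
  have hcat := succ_mul_catalan_eq_centralBinom k
  rw [Nat.centralBinom_eq_two_mul_choose] at hcat
  rw [show 2 * k - k = k by omega] at hratio
  apply Nat.eq_of_mul_eq_mul_left k.succ_pos
  nlinarith

theorem pathCount_zero (m : ℕ) : pathCount m 0 = if Even m then catalan (m / 2) else 0 := by
  split_ifs with hm
  · obtain ⟨k, rfl⟩ := hm
    rw [← two_mul, Nat.mul_div_cancel_left k two_pos, pathCount_two_mul_zero]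
  · exact pathCount_eq_zero_of_odd m 0 (by simpa using hm)

section Isometry

variable {H : Type*} [NormedAddCommGroup H] [InnerProductSpace ℂ H] [CompleteSpace H]
  {S : H →L[ℂ] H} {Ω : H}

theorem inner_pow_apply_self (hΩ : ‖Ω‖ = 1) (hSΩ : adjoint S Ω = 0) (n : ℕ) :
    inner ℂ ((S ^ n) Ω) Ω = if n = 0 then 1 else 0 := by
  cases n with
  | zero => simpa using inner_self_eq_one_of_norm_eq_one (𝕜 := ℂ) hΩ
  | succ n =>
    rw [pow_succ', mul_apply_eq_comp, ← adjoint_inner_right (𝕜 := ℂ), hSΩ, inner_zero_right,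
      if_neg n.succ_ne_zero]

theorem inner_pow_apply_add_adjoint_pow_apply (hS : adjoint S * S = 1) (hΩ : ‖Ω‖ = 1)
    (hSΩ : adjoint S Ω = 0) (m n : ℕ) :
    inner ℂ ((S ^ n) Ω) (((S + adjoint S) ^ m) Ω) = pathCount m n := by
  induction m generalizing n with
  | zero =>
    rw [pow_zero, one_apply_eq_self, inner_pow_apply_self hΩ hSΩ]
    cases n <;> simp [pathCount]
  | succ m ih =>
    have hX : adjoint (S + adjoint S) = adjoint S + S := by rw [map_add, adjoint_adjoint, add_comm]
    rw [pow_succ', mul_apply_eq_comp, ← adjoint_inner_left, hX, add_apply, inner_add_left]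
    cases n with
    | zero =>
      rw [pow_zero, one_apply_eq_self, hSΩ, inner_zero_left, zero_add]
      simpa [pathCount] using ih 1
    | succ n =>
      have hback : adjoint S ((S ^ (n + 1)) Ω) = (S ^ n) Ω := by
        rw [pow_succ', mul_apply_eq_comp, ← mul_apply_eq_comp (adjoint S), hS, one_apply_eq_self]
      rw [hback, ← mul_apply_eq_comp S, ← pow_succ', ih, ih, pathCount]
      push_cast
      ring

theorem inner_add_adjoint_pow_apply_self (hS : adjoint S * S = 1) (hΩ : ‖Ω‖ = 1)
    (hSΩ : adjoint S Ω = 0) (m : ℕ) :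
    inner ℂ Ω (((S + adjoint S) ^ m) Ω) = if Even m then (catalan (m / 2) : ℂ) else 0 := by
  simpa [pathCount_zero, apply_ite (Nat.cast : ℕ → ℂ)] using
    inner_pow_apply_add_adjoint_pow_apply hS hΩ hSΩ m 0

end Isometry

theorem eq_of_forall_inner_eq_of_dense_span {H ι : Type*} [NormedAddCommGroup H]
    [InnerProductSpace ℂ H] {e : ι → H}
    (hdense : (Submodule.span ℂ (Set.range e)).topologicalClosure = ⊤) {x y : H}
    (h : ∀ i, inner ℂ (e i) x = inner ℂ (e i) y) : x = y :=
  (Submodule.dense_iff_topologicalClosure_eq_top.mpr hdense).eq_of_inner_right ℂ fun v hv => by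
    induction hv using Submodule.span_induction with
    | mem _ hv => obtain ⟨i, rfl⟩ := hv; exact h i
    | zero => simp
    | add _ _ _ _ ha hb => simp [inner_add_left, ha, hb]
    | smul a _ _ ha => simp [inner_smul_left, ha]

theorem sum_ite_actsOn {M : Type*} [AddCommMonoid M] {r t : ℕ}
    (x : Fin r × List (Fin r × Fin t)) (v : M) :
    ∑ q, (if actsOn q x then v else 0) = v := by
  rcases x with ⟨i, _ | ⟨⟨a, _⟩, _⟩⟩ <;> simp [actsOn]

namespace MatriciallyFree

variable {H : Type*} [NormedAddCommGroup H] [InnerProductSpace ℂ H] {r t : ℕ}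
  {d : Fin r → ℝ} {e : Fin r × List (Fin r × Fin t) → H} {w : Fin t → H →L[ℂ] H}

theorem creation_apply_basis {c : Fin r → Fin r → Fin t → H →L[ℂ] H}
    (hc : ∀ p q u x, c p q u (e x) =
      if actsOn q x then (Real.sqrt (d p) : ℂ) • e (x.1, (p, u) :: x.2) else 0)
    (hw : ∀ u, w u = ∑ p, ∑ q, c p q u) (u : Fin t) (x : Fin r × List (Fin r × Fin t)) :
    w u (e x) = ∑ p, (Real.sqrt (d p) : ℂ) • e (x.1, (p, u) :: x.2) := by
  simp only [hw, sum_apply, hc, sum_ite_actsOn]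

theorem inner_creation_apply_basis (he : Orthonormal ℂ e) (hd0 : ∀ p, 0 ≤ d p)
    (hd1 : ∑ p, d p = 1)
    (hwe : ∀ u x, w u (e x) = ∑ p, (Real.sqrt (d p) : ℂ) • e (x.1, (p, u) :: x.2))
    (u v : Fin t) (x y : Fin r × List (Fin r × Fin t)) :
    inner ℂ (w u (e y)) (w v (e x)) = if u = v ∧ y = x then 1 else 0 := by
  rw [hwe, hwe, sum_inner]
  simp_rw [inner_sum, inner_smul_left, inner_smul_right, orthonormal_iff_ite.mp he]
  simp only [Prod.mk.injEq, List.cons.injEq]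
  by_cases h : u = v ∧ y = x
  · obtain ⟨rfl, rfl⟩ := h
    simp [← Complex.ofReal_mul, Real.mul_self_sqrt (hd0 _), ← Complex.ofReal_sum, hd1]
  · rw [if_neg h]
    refine Finset.sum_eq_zero fun p _ => Finset.sum_eq_zero fun p' _ => ?_
    rw [if_neg, mul_zero, mul_zero]
    rintro ⟨h1, ⟨-, huv⟩, h2⟩
    exact h ⟨huv, Prod.ext h1 h2⟩

variable [CompleteSpace H]

theorem adjoint_creation_mul_creation (he : Orthonormal ℂ e)
    (hdense : (Submodule.span ℂ (Set.range e)).topologicalClosure = ⊤)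
    (horth : ∀ u v x y, inner ℂ (w u (e y)) (w v (e x)) = if u = v ∧ y = x then 1 else 0)
    (u v : Fin t) : adjoint (w u) * w v = if u = v then 1 else 0 := by
  refine ContinuousLinearMap.ext_on
    (Submodule.dense_iff_topologicalClosure_eq_top.mpr hdense) ?_
  rintro _ ⟨x, rfl⟩
  refine eq_of_forall_inner_eq_of_dense_span hdense fun y => ?_
  rw [mul_apply_eq_comp, adjoint_inner_right, horth]
  by_cases huv : u = v <;> simp [huv, orthonormal_iff_ite.mp he]

theorem adjoint_creation_apply_vacuum (he : Orthonormal ℂ e)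
    (hdense : (Submodule.span ℂ (Set.range e)).topologicalClosure = ⊤)
    (hwe : ∀ u x, w u (e x) = ∑ p, (Real.sqrt (d p) : ℂ) • e (x.1, (p, u) :: x.2))
    (u : Fin t) (q : Fin r) : adjoint (w u) (e (q, [])) = 0 := by
  refine eq_of_forall_inner_eq_of_dense_span hdense fun y => ?_
  rw [adjoint_inner_right, hwe, sum_inner, inner_zero_right]
  exact Finset.sum_eq_zero fun p _ => by rw [inner_smul_left, he.inner_eq_zero (by simp), mul_zero]

end MatriciallyFree

open MatriciallyFree

/-- If the matricially free Gaussian operators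
`ω_{p,q}(u) = ℘_{p,q}(u) + ℘_{p,q}(u)*` have variances `d_p ≥ 0` with `d₁ + ⋯ + d_r = 1`,
then with `℘(u) = ∑_{p,q} ℘_{p,q}(u)` one has `℘(u)*℘(v) = δ_{u,v} 1`, and
`ω(u) = ∑_{p,q} ω_{p,q}(u)` has the standard semicircle distribution with respect to
`Ψ = ∑_q d_q Ψ_q`: its `2m`-th moment is the Catalan number `C_m` and odd moments vanish. -/
theorem stmt2 {H : Type} [NormedAddCommGroup H] [InnerProductSpace ℂ H] [CompleteSpace H]
    (r t : ℕ) (d : Fin r → ℝ) (hd0 : ∀ p, 0 ≤ d p) (hd1 : ∑ p, d p = 1)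
    (e : Fin r × List (Fin r × Fin t) → H) (he : Orthonormal ℂ e)
    (hdense : (Submodule.span ℂ (Set.range e)).topologicalClosure = ⊤)
    (c : Fin r → Fin r → Fin t → H →L[ℂ] H)
    (hc : ∀ p q u x, c p q u (e x) =
      if actsOn q x then (Real.sqrt (d p) : ℂ) • e (x.1, (p, u) :: x.2) else 0)
    (w : Fin t → H →L[ℂ] H) (hw : ∀ u, w u = ∑ p, ∑ q, c p q u)
    (om : Fin t → H →L[ℂ] H) (hom : ∀ u, om u = w u + adjoint (w u))
    (Psi : (H →L[ℂ] H) → ℂ)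
    (hPsi : ∀ X, Psi X = ∑ q, (d q : ℂ) *
      (@inner ℂ H _ (e (q, ([] : List (Fin r × Fin t)))) (X (e (q, []))))) :
    (∀ u v, adjoint (w u) * w v = if u = v then 1 else 0) ∧
    (∀ u (m : ℕ), Psi ((om u) ^ m) =
      if Even m then (catalan (m / 2) : ℂ) else 0) := by
  have hwe := creation_apply_basis hc hw
  have hiso := adjoint_creation_mul_creation he hdense (inner_creation_apply_basis he hd0 hd1 hwe)
  refine ⟨hiso, fun u m => ?_⟩
  have hvacuum (q : Fin r) : inner ℂ (e (q, [])) ((om u ^ m) (e (q, []))) =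
      if Even m then (catalan (m / 2) : ℂ) else 0 := by
    rw [hom]
    exact inner_add_adjoint_pow_apply_self (by simpa using hiso u u) (he.1 _)
      (adjoint_creation_apply_vacuum he hdense hwe u q) m
  rw [hPsi]
  simp_rw [hvacuum]
  rw [← Finset.sum_mul, ← Complex.ofReal_sum, hd1, Complex.ofReal_one, one_mul]
end

section
/- Let $\{\wp(u):u\in\mathcal{U}\}$ satisfy $\wp(u)^*\wp(v)=\delta_{u,v}1$ with $\wp(u)=\sum_{p,q}\ell(p,q,u)\otimes e(p,q)$ and covariances $\ell(p,q,u)^*\ell(p,q,u)=d_p$ where $d_1+\cdots+d_r=1$, and let $P_q = 1\otimes e(q,q)$. Then for $Q_p = P_p - d_p\cdot 1$ one has $\wp(u)^*\,Q_p\,\wp(u) = 0$ for every $p$ and $u$. -/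
/-!
On a basis vector `ξ ⊗ e_j`, `℘(u)` gives `∑_a √d_a · e(a, j, u)ξ ⊗ e_a`, a combination of
orthonormal vectors that depend injectively on `(ξ, j, a)`. Hence
`⟪℘(u)x, ℘(u)y⟫ = δ_{xy} ∑_a d_a = δ_{xy}` and `⟪℘(u)x, P_p ℘(u)y⟫ = δ_{xy} d_p` for basis
vectors `x, y`, so every matrix coefficient of `℘(u)* Q_p ℘(u)` vanishes, and density of the
span of the basis finishes the proof.
-/

open ContinuousLinearMap

theorem ContinuousLinearMap.eq_zero_of_inner_dense_span {𝕜 G ι : Type*} [RCLike 𝕜]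
    [NormedAddCommGroup G] [InnerProductSpace 𝕜 G] {v : ι → G}
    (hv : (Submodule.span 𝕜 (Set.range v)).topologicalClosure = ⊤) {T : G →L[𝕜] G}
    (h : ∀ i j, inner 𝕜 (v i) (T (v j)) = 0) : T = 0 := by
  have hdense : Dense (Submodule.span 𝕜 (Set.range v) : Set G) :=
    Submodule.dense_iff_topologicalClosure_eq_top.mpr hv
  refine ext_on hdense ?_
  rintro _ ⟨j, rfl⟩
  have hT : innerSL 𝕜 (T (v j)) = 0 :=
    ext_on hdense (by rintro _ ⟨i, rfl⟩; simp [inner_eq_zero_symm.mp (h i j)])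
  rw [zero_apply, ← norm_eq_zero, ← innerSL_apply_norm 𝕜, hT, norm_zero]

theorem Orthonormal.inner_sum_curry {𝕜 E ι κ : Type*} [RCLike 𝕜] [NormedAddCommGroup E]
    [InnerProductSpace 𝕜 E] [Fintype κ] [DecidableEq ι] {v : ι × κ → E}
    (hv : Orthonormal 𝕜 v) (c c' : κ → 𝕜) (i i' : ι) :
    inner 𝕜 (∑ a, c a • v (i, a)) (∑ a, c' a • v (i', a)) =
      if i = i' then ∑ a, starRingEnd 𝕜 (c a) * c' a else 0 := by
  split_ifs with h
  · subst h
    exact (hv.comp _ (Prod.mk_right_injective i)).inner_sum c c' Finset.univ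
  · have hij : ∀ a b, inner 𝕜 (v (i, a)) (v (i', b)) = 0 := fun a b =>
      hv.inner_eq_zero (by simp [h])
    simp [sum_inner, inner_sum, inner_smul_left, inner_smul_right, hij]

section FockModel

variable {G : Type*} [NormedAddCommGroup G] [InnerProductSpace ℂ G]
  {r t : ℕ} {d : Fin r → ℝ} {eG : List (Fin r × Fin r × Fin t) × Fin r → G}

/-- `createdVector eG u ((ws, j), a)` is the image of `ws ⊗ e_j` under `ℓ(a, j, u) ⊗ e(a, j)`,
without its factor `√d_a`. -/
def createdVector (eG : List (Fin r × Fin r × Fin t) × Fin r → G) (u : Fin t) :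
    (List (Fin r × Fin r × Fin t) × Fin r) × Fin r → G :=
  fun x => eG ((x.2, x.1.2, u) :: x.1.1, x.2)

theorem orthonormal_createdVector (heG : Orthonormal ℂ eG) (u : Fin t) :
    Orthonormal ℂ (createdVector eG u) :=
  heG.comp _ fun x y h => by
    obtain ⟨⟨ws, j⟩, a⟩ := x
    obtain ⟨⟨ws', j'⟩, a'⟩ := y
    simp only [Prod.mk.injEq, List.cons.injEq] at h
    obtain ⟨⟨⟨rfl, rfl, -⟩, rfl⟩, -⟩ := h
    rfl

variable {L : Fin r → Fin r → Fin t → G →L[ℂ] G} {w : Fin t → G →L[ℂ] G}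

theorem creation_sum_apply
    (hL : ∀ p q u w j, L p q u (eG (w, j)) =
      if j = q then (Real.sqrt (d p) : ℂ) • eG ((p, q, u) :: w, p) else 0)
    (hw : ∀ u, w u = ∑ p, ∑ q, L p q u) (u : Fin t)
    (x : List (Fin r × Fin r × Fin t) × Fin r) :
    w u (eG x) = ∑ a, (Real.sqrt (d a) : ℂ) • createdVector eG u (x, a) := by
  simp [hw, sum_apply, hL, createdVector]

theorem inner_creation_sum_apply (hd0 : ∀ p, 0 ≤ d p) (hd1 : ∑ p, d p = 1)
    (heG : Orthonormal ℂ eG)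
    (hL : ∀ p q u w j, L p q u (eG (w, j)) =
      if j = q then (Real.sqrt (d p) : ℂ) • eG ((p, q, u) :: w, p) else 0)
    (hw : ∀ u, w u = ∑ p, ∑ q, L p q u) (u : Fin t)
    (x y : List (Fin r × Fin r × Fin t) × Fin r) :
    inner ℂ (w u (eG x)) (w u (eG y)) = if x = y then 1 else 0 := by
  rw [creation_sum_apply hL hw, creation_sum_apply hL hw,
    (orthonormal_createdVector heG u).inner_sum_curry]
  have hsq : ∀ a, starRingEnd ℂ (Real.sqrt (d a)) * (Real.sqrt (d a) : ℂ) = d a := fun a => by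
    rw [Complex.conj_ofReal, ← Complex.ofReal_mul, Real.mul_self_sqrt (hd0 a)]
  simp only [hsq, ← Complex.ofReal_sum, hd1, Complex.ofReal_one]

theorem inner_creation_sum_apply_projection (hd0 : ∀ p, 0 ≤ d p)
    (heG : Orthonormal ℂ eG)
    (hL : ∀ p q u w j, L p q u (eG (w, j)) =
      if j = q then (Real.sqrt (d p) : ℂ) • eG ((p, q, u) :: w, p) else 0)
    (hw : ∀ u, w u = ∑ p, ∑ q, L p q u) {P : Fin r → G →L[ℂ] G}
    (hP : ∀ q w j, P q (eG (w, j)) = if j = q then eG (w, j) else 0)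
    (p : Fin r) (u : Fin t) (x y : List (Fin r × Fin r × Fin t) × Fin r) :
    inner ℂ (w u (eG x)) (P p (w u (eG y))) = if x = y then (d p : ℂ) else 0 := by
  have hPw : P p (w u (eG y)) =
      ∑ a, (if a = p then (Real.sqrt (d a) : ℂ) else 0) • createdVector eG u (y, a) := by
    simp [creation_sum_apply hL hw, createdVector, hP, ite_smul]
  rw [hPw, creation_sum_apply hL hw, (orthonormal_createdVector heG u).inner_sum_curry]
  simp [Complex.conj_ofReal, ← Complex.ofReal_mul, Real.mul_self_sqrt (hd0 p)]

end FockModel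

/-- In the model `𝓕(𝓗) ⊗ ℂ^r` (Hilbert space `G` with orthonormal basis
`eG` indexed by pairs (word of letters `e(p,q,u)`, basis index of `ℂ^r`)), let
`ℓ(p,q,u) ⊗ e(p,q)` be modeled by `L p q u`, with covariances `ℓ(p,q,u)*ℓ(p,q,u) = d_p`,
`d₁ + ⋯ + d_r = 1`, let `℘(u) = ∑_{p,q} L p q u` and `P_q = 1 ⊗ e(q,q)`.  Then for
`Q_p = P_p - d_p·1` one has `℘(u)* Q_p ℘(u) = 0` for every `p` and `u`. -/
theorem stmt3 {G : Type} [NormedAddCommGroup G] [InnerProductSpace ℂ G] [CompleteSpace G]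
    (r t : ℕ) (d : Fin r → ℝ) (hd0 : ∀ p, 0 ≤ d p) (hd1 : ∑ p, d p = 1)
    (eG : List (Fin r × Fin r × Fin t) × Fin r → G) (heG : Orthonormal ℂ eG)
    (hdense : (Submodule.span ℂ (Set.range eG)).topologicalClosure = ⊤)
    (L : Fin r → Fin r → Fin t → G →L[ℂ] G)
    (hL : ∀ p q u w j, L p q u (eG (w, j)) =
      if j = q then (Real.sqrt (d p) : ℂ) • eG ((p, q, u) :: w, p) else 0)
    (P : Fin r → G →L[ℂ] G)
    (hP : ∀ q w j, P q (eG (w, j)) = if j = q then eG (w, j) else 0)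
    (w : Fin t → G →L[ℂ] G) (hw : ∀ u, w u = ∑ p, ∑ q, L p q u) :
    ∀ p u, adjoint (w u) * (P p - (d p : ℂ) • (1 : G →L[ℂ] G)) * w u = 0 := by
  intro p u
  refine eq_zero_of_inner_dense_span hdense fun x y => ?_
  rw [mul_apply_eq_comp, mul_apply_eq_comp, adjoint_inner_right, sub_apply, smul_apply,
    one_apply_eq_self, inner_sub_right, inner_smul_right,
    inner_creation_sum_apply_projection hd0 heG hL hw hP,
    inner_creation_sum_apply hd0 hd1 heG hL hw]
  split_ifs <;> simp
end

section
/- If $(q,q)\in\mathcal{J}$ and $b_{q,q}(u)>0$, then the distribution of the diagonal matricially free Gaussian operator $\omega_{q,q}(u)$ in the state $\Psi_{q}$ is the semicircle law of radius $2\sqrt{b_{q,q}(u)}$; that is, $\Psi_q(\omega_{q,q}(u)^{2m}) = C_m\, b_{q,q}(u)^m$ where $C_m$ is the $m$-th Catalan number, and odd moments vanish. If $p\neq q$, the distribution of $\omega_{p,q}(u)$ in $\Psi_q$ is the Bernoulli law at $\pm\sqrt{b_{p,q}(u)}$: $\Psi_q(\omega_{p,q}(u)^{2m})=b_{p,q}(u)^m$.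 -/
/-!
On the chain `v k = e (q, [(q, u), …, (q, u)])` (k letters) the diagonal operator
`ω = c + c†` acts as `s` times the free Jacobi matrix: `ω v₀ = s v₁` and
`ω v₍ₖ₊₁₎ = s (v₍ₖ₊₂₎ + vₖ)`, with `s = √b_{q,q}(u)`. Since `ω` is symmetric,
`⟪v k, ωⁿ v₀⟫ = sⁿ P(n, k)`, where `P(n, k)` counts ±1 paths of length `n` from `0` to `k`
that stay nonnegative. The ballot formula `P(n, k) = C(n, j) - C(n, j + 1)` for
`n + k = 2j`, which is the Catalan number for `k = 0`, `n = 2m`, and `P(n, k) = 0` if `n + k`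
is odd. For `p ≠ q`, `c` cannot act on `e (q, [(p, u)])` since its first letter is not `q`, so
`ω` just swaps `e (q, [])` and `e (q, [(p, u)])` up to the factor `√b_{p,q}(u)`.
-/

open ContinuousLinearMap

def nonnegPathCount : ℕ → ℕ → ℕ
  | 0, 0 => 1
  | 0, _ + 1 => 0
  | n + 1, 0 => nonnegPathCount n 1
  | n + 1, k + 1 => nonnegPathCount n k + nonnegPathCount n (k + 2)

theorem nonnegPathCount_eq_zero_of_odd : ∀ {n k : ℕ}, Odd (n + k) → nonnegPathCount n k = 0
  | 0, 0, h => absurd h (by decide)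
  | 0, _ + 1, _ => rfl
  | n + 1, 0, ⟨i, hi⟩ => nonnegPathCount_eq_zero_of_odd (n := n) (k := 1) ⟨i, by omega⟩
  | n + 1, k + 1, ⟨i, hi⟩ => by
    rw [nonnegPathCount, nonnegPathCount_eq_zero_of_odd ⟨i - 1, by omega⟩,
      nonnegPathCount_eq_zero_of_odd ⟨i, by omega⟩]

theorem nonnegPathCount_eq_choose_sub_choose :
    ∀ {n k j : ℕ}, n + k = 2 * j → (nonnegPathCount n k : ℤ) = n.choose j - n.choose (j + 1)
  | 0, 0, j, h => by
    obtain rfl : j = 0 := by omega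
    simp [nonnegPathCount]
  | 0, k + 1, j, h => by
    simp [nonnegPathCount, Nat.choose_eq_zero_of_lt (show 0 < j by omega)]
  | n + 1, 0, j + 1, h => by
    have hsymm : n.choose j = n.choose (j + 1) := by
      obtain rfl : n = 2 * j + 1 := by omega
      exact (Nat.choose_symm_half j).symm
    rw [nonnegPathCount, nonnegPathCount_eq_choose_sub_choose (j := j + 1) (by omega)]
    push_cast [Nat.choose_succ_succ', hsymm]
    ring
  | n + 1, k + 1, j + 1, h => by
    rw [nonnegPathCount, Nat.cast_add, nonnegPathCount_eq_choose_sub_choose (j := j) (by omega),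
      nonnegPathCount_eq_choose_sub_choose (j := j + 1) (by omega)]
    push_cast [Nat.choose_succ_succ']
    ring
  | _ + 1, _, 0, h => by omega

theorem catalan_eq_choose_sub_choose (m : ℕ) :
    (catalan m : ℤ) = (2 * m).choose m - (2 * m).choose (m + 1) := by
  have hcat : ((m + 1) * catalan m : ℤ) = (2 * m).choose m := by
    exact_mod_cast (succ_mul_catalan_eq_centralBinom m).trans (Nat.centralBinom_eq_two_mul_choose m)
  have hsucc : ((2 * m).choose (m + 1) * (m + 1) : ℤ) = (2 * m).choose m * m := by
    exact_mod_cast (by simpa [two_mul] using Nat.choose_succ_right_eq (2 * m) m)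
  apply mul_left_cancel₀ (show (m + 1 : ℤ) ≠ 0 by positivity)
  linear_combination hcat + hsucc

theorem nonnegPathCount_two_mul_zero (m : ℕ) : nonnegPathCount (2 * m) 0 = catalan m := by
  exact_mod_cast (nonnegPathCount_eq_choose_sub_choose (by omega)).trans
    (catalan_eq_choose_sub_choose m).symm

section InnerProduct

variable {H : Type*} [NormedAddCommGroup H] [InnerProductSpace ℂ H]

theorem LinearMap.IsSymmetric.inner_pow_apply_eq_nonnegPathCount {T : H →L[ℂ] H}
    (hT : T.IsSymmetric) {v : ℕ → H} (hv : Orthonormal ℂ v) (s : ℝ)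
    (h₀ : T (v 0) = (s : ℂ) • v 1)
    (hsucc : ∀ k, T (v (k + 1)) = (s : ℂ) • v (k + 2) + (s : ℂ) • v k) :
    ∀ n k, inner ℂ (v k) ((T ^ n) (v 0)) = (s : ℂ) ^ n * nonnegPathCount n k
  | 0, k => by
    rw [pow_zero, one_apply_eq_self, orthonormal_iff_ite.mp hv]
    cases k <;> simp [nonnegPathCount]
  | n + 1, 0 => by
    rw [pow_succ', mul_apply_eq_comp, ← hT.apply_clm, h₀, inner_smul_left, Complex.conj_ofReal,
      inner_pow_apply_eq_nonnegPathCount hT hv s h₀ hsucc n 1, nonnegPathCount]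
    ring
  | n + 1, k + 1 => by
    rw [pow_succ', mul_apply_eq_comp, ← hT.apply_clm, hsucc, inner_add_left, inner_smul_left,
      inner_smul_left, Complex.conj_ofReal,
      inner_pow_apply_eq_nonnegPathCount hT hv s h₀ hsucc n,
      inner_pow_apply_eq_nonnegPathCount hT hv s h₀ hsucc n, nonnegPathCount]
    push_cast
    ring

theorem ContinuousLinearMap.pow_apply_of_apply_eq_smul {R M : Type*} [CommSemiring R]
    [TopologicalSpace M] [AddCommMonoid M] [Module R M] {f : M →L[R] M} {a : R} {x : M}
    (h : f x = a • x) (m : ℕ) : (f ^ m) x = a ^ m • x := by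
  induction m with
  | zero => simp
  | succ m ih => rw [pow_succ, mul_apply_eq_comp, h, map_smul, ih, smul_smul, pow_succ']

theorem eq_of_forall_inner_eq {ι : Type*} {e : ι → H}
    (hdense : (Submodule.span ℂ (Set.range e)).topologicalClosure = ⊤)
    {x y : H} (h : ∀ i, inner ℂ x (e i) = inner ℂ y (e i)) : x = y :=
  innerSL_inj.mp <| ContinuousLinearMap.ext_on
    (Submodule.dense_iff_topologicalClosure_eq_top.mpr hdense)
    (by rintro _ ⟨i, rfl⟩; simpa using h i)

end InnerProduct

section Creation

variable {H : Type*} [NormedAddCommGroup H] [InnerProductSpace ℂ H] {r t : ℕ}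
  {e : Fin r × List (Fin r × Fin t) → H} {C : H →L[ℂ] H} {p q : Fin r} {u : Fin t} {s : ℝ}

theorem creation_apply_vacuum
    (hC : ∀ x, C (e x) = if actsOn q x then (s : ℂ) • e (x.1, (p, u) :: x.2) else 0) :
    C (e (q, [])) = (s : ℂ) • e (q, [(p, u)]) := by
  rw [hC, if_pos (by simp [actsOn])]

variable [CompleteSpace H]

theorem adjoint_apply_eq_of_forall_inner
    (hdense : (Submodule.span ℂ (Set.range e)).topologicalClosure = ⊤) {w z : H}
    (h : ∀ i, inner ℂ w (C (e i)) = inner ℂ z (e i)) : adjoint C w = z :=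
  eq_of_forall_inner_eq hdense fun i => by rw [adjoint_inner_left, h]

theorem adjoint_creation_apply_vacuum (he : Orthonormal ℂ e)
    (hdense : (Submodule.span ℂ (Set.range e)).topologicalClosure = ⊤)
    (hC : ∀ x, C (e x) = if actsOn q x then (s : ℂ) • e (x.1, (p, u) :: x.2) else 0)
    (q' : Fin r) : adjoint C (e (q', [])) = 0 := by
  refine adjoint_apply_eq_of_forall_inner hdense fun x => ?_
  rw [hC, inner_zero_left]
  split_ifs
  · rw [inner_smul_right, orthonormal_iff_ite.mp he, if_neg (by simp), mul_zero]
  · rw [inner_zero_right]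

theorem adjoint_creation_apply_cons (he : Orthonormal ℂ e)
    (hdense : (Submodule.span ℂ (Set.range e)).topologicalClosure = ⊤)
    (hC : ∀ x, C (e x) = if actsOn q x then (s : ℂ) • e (x.1, (p, u) :: x.2) else 0)
    {x : Fin r × List (Fin r × Fin t)} (hx : actsOn q x) :
    adjoint C (e (x.1, (p, u) :: x.2)) = (s : ℂ) • e x := by
  refine adjoint_apply_eq_of_forall_inner hdense fun y => ?_
  rw [hC, inner_smul_left, Complex.conj_ofReal, orthonormal_iff_ite.mp he]
  by_cases hxy : x = y
  · subst hxy
    rw [if_pos hx, inner_smul_right, orthonormal_iff_ite.mp he, if_pos rfl, if_pos rfl]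
  · rw [if_neg hxy]
    split_ifs
    · rw [inner_smul_right, orthonormal_iff_ite.mp he, if_neg, mul_zero]
      obtain ⟨x₁, x₂⟩ := x
      obtain ⟨y₁, y₂⟩ := y
      simpa using hxy
    · rw [inner_zero_right, mul_zero]

theorem inner_vacuum_pow_creation_add_adjoint_eq_nonnegPathCount (he : Orthonormal ℂ e)
    (hdense : (Submodule.span ℂ (Set.range e)).topologicalClosure = ⊤)
    (hC : ∀ x, C (e x) = if actsOn q x then (s : ℂ) • e (x.1, (q, u) :: x.2) else 0) (n : ℕ) :
    inner ℂ (e (q, [])) (((C + adjoint C) ^ n) (e (q, []))) =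
      (s : ℂ) ^ n * nonnegPathCount n 0 := by
  set v : ℕ → H := fun k => e (q, List.replicate k (q, u))
  have hv : Orthonormal ℂ v := he.comp _ fun k l hkl => by simpa using congrArg (·.2.length) hkl
  have hacts : ∀ k, actsOn q (q, List.replicate k (q, u)) := by
    rintro (_ | _) <;> simp [actsOn, List.replicate_succ]
  refine (IsSelfAdjoint.add_star_self C).isSymmetric.inner_pow_apply_eq_nonnegPathCount hv s ?_
    (fun k => ?_) n 0
  · change C (e (q, [])) + adjoint C (e (q, [])) = (s : ℂ) • e (q, [(q, u)])
    rw [creation_apply_vacuum hC, adjoint_creation_apply_vacuum he hdense hC, add_zero]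
  · rw [star_eq_adjoint, add_apply, hC, if_pos (hacts (k + 1))]
    exact congrArg _ (adjoint_creation_apply_cons he hdense hC (hacts k))

theorem creation_add_adjoint_pow_two_mul_vacuum (he : Orthonormal ℂ e)
    (hdense : (Submodule.span ℂ (Set.range e)).topologicalClosure = ⊤)
    (hC : ∀ x, C (e x) = if actsOn q x then (s : ℂ) • e (x.1, (p, u) :: x.2) else 0)
    (hpq : p ≠ q) (m : ℕ) :
    ((C + adjoint C) ^ (2 * m)) (e (q, [])) = ((s : ℂ) ^ 2) ^ m • e (q, []) := by
  have hC₁ : C (e (q, [(p, u)])) = 0 := by rw [hC, if_neg (by simpa [actsOn] using hpq)]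
  have hA₁ : adjoint C (e (q, [(p, u)])) = (s : ℂ) • e (q, []) :=
    adjoint_creation_apply_cons he hdense hC (x := (q, [])) (by simp [actsOn])
  have hω₀ : (C + adjoint C) (e (q, [])) = (s : ℂ) • e (q, [(p, u)]) := by
    rw [add_apply, creation_apply_vacuum hC, adjoint_creation_apply_vacuum he hdense hC, add_zero]
  have hω₁ : (C + adjoint C) (e (q, [(p, u)])) = (s : ℂ) • e (q, []) := by
    rw [add_apply, hC₁, hA₁, zero_add]
  rw [pow_mul]
  refine pow_apply_of_apply_eq_smul ?_ m
  rw [sq, mul_apply_eq_comp, hω₀, map_smul, hω₁, smul_smul, sq]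

end Creation

theorem stmt9_general {H : Type} [NormedAddCommGroup H] [InnerProductSpace ℂ H] [CompleteSpace H]
    (r t : ℕ) (b : Fin r → Fin r → Fin t → ℝ) (hb : ∀ p q u, 0 ≤ b p q u)
    (e : Fin r × List (Fin r × Fin t) → H) (he : Orthonormal ℂ e)
    (hdense : (Submodule.span ℂ (Set.range e)).topologicalClosure = ⊤)
    (c : Fin r → Fin r → Fin t → H →L[ℂ] H)
    (hc : ∀ p q u x, c p q u (e x) =
      if actsOn q x then (Real.sqrt (b p q u) : ℂ) • e (x.1, (p, u) :: x.2) else 0)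
    (om : Fin r → Fin r → Fin t → H →L[ℂ] H)
    (hom : ∀ i j u, om i j u = c i j u + adjoint (c i j u))
    (q : Fin r) (u : Fin t) :
    (∀ m : ℕ,
      (@inner ℂ H _ (e (q, ([] : List (Fin r × Fin t)))) (((om q q u) ^ (2 * m)) (e (q, [])))) =
        (((catalan m : ℝ) * (b q q u) ^ m : ℝ) : ℂ)) ∧
    (∀ m : ℕ, Odd m →
      (@inner ℂ H _ (e (q, ([] : List (Fin r × Fin t)))) (((om q q u) ^ m) (e (q, [])))) = 0) ∧
    (∀ p : Fin r, p ≠ q → ∀ m : ℕ,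
      (@inner ℂ H _ (e (q, ([] : List (Fin r × Fin t)))) (((om p q u) ^ (2 * m)) (e (q, [])))) =
        (((b p q u) ^ m : ℝ) : ℂ)) := by
  have hsq : ∀ p, ((Real.sqrt (b p q u) : ℂ)) ^ 2 = b p q u := fun p => by
    rw [← Complex.ofReal_pow, Real.sq_sqrt (hb p q u)]
  have hdiag := inner_vacuum_pow_creation_add_adjoint_eq_nonnegPathCount he hdense (hc q q u)
  refine ⟨fun m => ?_, fun m hm => ?_, fun p hpq m => ?_⟩
  · rw [hom, hdiag, nonnegPathCount_two_mul_zero, pow_mul, hsq]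
    push_cast
    ring
  · rw [hom, hdiag, nonnegPathCount_eq_zero_of_odd (by simpa using hm), Nat.cast_zero, mul_zero]
  · rw [hom, creation_add_adjoint_pow_two_mul_vacuum he hdense (hc p q u) hpq, inner_smul_right,
      inner_self_eq_norm_sq_to_K, he.1, hsq]
    push_cast
    ring

/-- If `b_{q,q}(u) > 0`, the distribution of the diagonal matricially free
Gaussian operator `ω_{q,q}(u)` in the state `Ψ_q` is the semicircle law of radius
`2√(b_{q,q}(u))`: `Ψ_q(ω_{q,q}(u)^{2m}) = C_m b_{q,q}(u)^m` (Catalan numbers) and odd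
moments vanish.  For `p ≠ q`, the distribution of `ω_{p,q}(u)` in `Ψ_q` is the Bernoulli
law at `±√(b_{p,q}(u))`: `Ψ_q(ω_{p,q}(u)^{2m}) = b_{p,q}(u)^m`. -/
theorem stmt9 {H : Type} [NormedAddCommGroup H] [InnerProductSpace ℂ H] [CompleteSpace H]
    (r t : ℕ) (b : Fin r → Fin r → Fin t → ℝ) (hb : ∀ p q u, 0 ≤ b p q u)
    (e : Fin r × List (Fin r × Fin t) → H) (he : Orthonormal ℂ e)
    (hdense : (Submodule.span ℂ (Set.range e)).topologicalClosure = ⊤)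
    (c : Fin r → Fin r → Fin t → H →L[ℂ] H)
    (hc : ∀ p q u x, c p q u (e x) =
      if actsOn q x then (Real.sqrt (b p q u) : ℂ) • e (x.1, (p, u) :: x.2) else 0)
    (om : Fin r → Fin r → Fin t → H →L[ℂ] H)
    (hom : ∀ i j u, om i j u = c i j u + adjoint (c i j u))
    (q : Fin r) (u : Fin t) (hbq : 0 < b q q u) :
    (∀ m : ℕ,
      (@inner ℂ H _ (e (q, ([] : List (Fin r × Fin t)))) (((om q q u) ^ (2 * m)) (e (q, [])))) =
        (((catalan m : ℝ) * (b q q u) ^ m : ℝ) : ℂ)) ∧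
    (∀ m : ℕ, Odd m →
      (@inner ℂ H _ (e (q, ([] : List (Fin r × Fin t)))) (((om q q u) ^ m) (e (q, [])))) = 0) ∧
    (∀ p : Fin r, p ≠ q → ∀ m : ℕ,
      (@inner ℂ H _ (e (q, ([] : List (Fin r × Fin t)))) (((om p q u) ^ (2 * m)) (e (q, [])))) =
        (((b p q u) ^ m : ℝ) : ℂ)) :=
  stmt9_general r t b hb e he hdense c hc om hom q u
end

section
/- Define diagonal matrices $\mathcal{C}_n\in M_r(\mathbb{C})$ by $\mathcal{C}_0 = I$ and $\mathcal{C}_n = \sum_{i+j=n-1}\mathcal{D}(\mathcal{C}_i B \mathcal{C}_j)$, where $B=(b_{p,q})$ has nonnegative entries and $\mathcal{D}(A) = \mathrm{diag}(\sum_i a_{i,1},\dots,\sum_i a_{i,r})$. Then $\|\mathcal{C}_m\| \leq C_m\, r^m\, \|B\|^m$ where $C_m$ is the $m$-th Catalan number, and consequently the matrix power series $M(z)=\sum_{m\geq 0}\mathcal{C}_m z^{2m}$ converges in operator norm for $|z| < (4r\|B\|)^{-1/2}$ and satisfies $M(z) = I + \mathcal{D}(M(z)\,B\,M(z))\,z^2$.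 -/
/- We endow square matrices with the `L∞` operator norm (maximum absolute row sum). -/
attribute [local instance] Matrix.linftyOpNormedAddCommGroup Matrix.linftyOpNormedRing
  Matrix.linftyOpNormedSpace

/-- The column-sum diagonalization map
`𝒟(A) = diag(∑_i a_{i,1}, …, ∑_i a_{i,r})`. -/
def diagMap {r : ℕ} (A : Matrix (Fin r) (Fin r) ℝ) : Matrix (Fin r) (Fin r) ℝ :=
  Matrix.diagonal (fun q => ∑ i, A i q)

/-! Since `𝒟` inflates the `L∞` operator norm by at most a factor `r`, the recursion for the
`𝒞_n` is dominated, term by term, by Segner's recursion for the Catalan numbers, which gives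
`‖𝒞_m‖ ≤ C_m (r‖B‖)^m`. As `C_m ≤ 4^m`, the series `∑ 𝒞_m z^{2m}` is then dominated by a
geometric series of ratio `4 r ‖B‖ z² < 1`. Its Cauchy square `M B M` has `n`-th coefficient
`∑_{i+j=n} 𝒞_i B 𝒞_j`, to which the continuous linear map `𝒟` can be applied termwise, and
the recursion turns `z² 𝒟(M B M)` into `M - I`. -/

open Finset

namespace Matrix

variable {m n α : Type*} [Fintype m] [Fintype n]

theorem linfty_opNNNorm_apply_le [NormedAddCommGroup α] (A : Matrix m n α) (i : m) (j : n) :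
    ‖A i j‖₊ ≤ ‖A‖₊ := by
  rw [linfty_opNNNorm_def]
  exact (single_le_sum (fun _ _ => bot_le) (mem_univ j)).trans
    (le_sup (f := fun i => ∑ j, ‖A i j‖₊) (mem_univ i))

theorem linfty_opNorm_apply_le [NormedAddCommGroup α] (A : Matrix m n α) (i : m) (j : n) :
    ‖A i j‖ ≤ ‖A‖ :=
  linfty_opNNNorm_apply_le A i j

theorem linfty_opNorm_one_le [DecidableEq m] [NormedRing α] [NormOneClass α] :
    ‖(1 : Matrix m m α)‖ ≤ 1 := by
  rw [← diagonal_one, linfty_opNorm_diagonal]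
  exact (pi_norm_const_le (1 : α)).trans_eq norm_one

end Matrix

theorem catalan_le_four_pow (n : ℕ) : catalan n ≤ 4 ^ n := by
  rw [catalan_eq_centralBinom_div]
  exact (Nat.div_le_self _ _).trans (Nat.centralBinom_le_four_pow n)

section DiagMap

variable {r : ℕ}

theorem norm_diagMap_le (A : Matrix (Fin r) (Fin r) ℝ) : ‖diagMap A‖ ≤ r * ‖A‖ := by
  rw [diagMap, Matrix.linfty_opNorm_diagonal]
  refine (pi_norm_le_iff_of_nonneg (by positivity)).2 fun q => ?_
  calc ‖∑ i, A i q‖ ≤ ∑ i, ‖A i q‖ := norm_sum_le _ _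
    _ ≤ ∑ _i : Fin r, ‖A‖ := sum_le_sum fun i _ => A.linfty_opNorm_apply_le i q
    _ = r * ‖A‖ := by simp

variable (r) in
noncomputable def diagMapCLM : Matrix (Fin r) (Fin r) ℝ →L[ℝ] Matrix (Fin r) (Fin r) ℝ :=
  LinearMap.toContinuousLinearMap
    { toFun := diagMap
      map_add' := fun A B => by
        simp [diagMap, ← Matrix.diagonal_add, sum_add_distrib]
      map_smul' := fun c A => by
        simp [diagMap, ← Matrix.diagonal_smul, mul_sum, Pi.smul_def] }

@[simp]
theorem diagMapCLM_apply (A : Matrix (Fin r) (Fin r) ℝ) : diagMapCLM r A = diagMap A := rfl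

end DiagMap

section CatalanMatrices

variable {r : ℕ} {B : Matrix (Fin r) (Fin r) ℝ} {C : ℕ → Matrix (Fin r) (Fin r) ℝ}

structure IsCatalanMatrices (B : Matrix (Fin r) (Fin r) ℝ) (C : ℕ → Matrix (Fin r) (Fin r) ℝ) :
    Prop where
  zero : C 0 = 1
  succ : ∀ n, C (n + 1) = ∑ i ∈ range (n + 1), diagMap (C i * B * C (n - i))

theorem norm_catalanMatrix_le (hC : IsCatalanMatrices B C) (m : ℕ) :
    ‖C m‖ ≤ catalan m * (r * ‖B‖) ^ m := by
  set K := (r : ℝ) * ‖B‖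
  induction m using Nat.strong_induction_on with
  | _ m ih =>
  cases m with
  | zero => simpa [hC.zero] using Matrix.linfty_opNorm_one_le
  | succ n =>
    have hterm : ∀ i ∈ range (n + 1),
        ‖diagMap (C i * B * C (n - i))‖ ≤ (catalan i * catalan (n - i) : ℕ) * K ^ (n + 1) := by
      intro i hi
      have hin : i ≤ n := Nat.lt_succ_iff.mp (mem_range.mp hi)
      calc ‖diagMap (C i * B * C (n - i))‖ ≤ r * (‖C i‖ * ‖B‖ * ‖C (n - i)‖) :=
            (norm_diagMap_le _).trans (by gcongr; exact norm_mul₃_le)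
        _ ≤ r * ((catalan i * K ^ i) * ‖B‖ * (catalan (n - i) * K ^ (n - i))) := by
            gcongr
            exacts [ih i (by omega), ih (n - i) (by omega)]
        _ = (catalan i * catalan (n - i) : ℕ) * K ^ (n + 1) := by
            rw [show n + 1 = i + (n - i) + 1 by omega, pow_succ, pow_add]
            push_cast
            ring
    calc ‖C (n + 1)‖ ≤ ∑ i ∈ range (n + 1), ‖diagMap (C i * B * C (n - i))‖ :=
          hC.succ n ▸ norm_sum_le _ _
      _ ≤ ∑ i ∈ range (n + 1), (catalan i * catalan (n - i) : ℕ) * K ^ (n + 1) :=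
          sum_le_sum hterm
      _ = catalan (n + 1) * K ^ (n + 1) := by
          rw [← sum_mul, ← Nat.cast_sum, catalan_succ',
            Finset.Nat.sum_antidiagonal_eq_sum_range_succ_mk]

theorem norm_pow_smul_catalanMatrix_le (hC : IsCatalanMatrices B C)
    (z : ℝ) (m : ℕ) : ‖z ^ (2 * m) • C m‖ ≤ (z ^ 2 * (4 * r * ‖B‖)) ^ m := by
  have hcat : (catalan m : ℝ) ≤ 4 ^ m := by exact_mod_cast catalan_le_four_pow m
  calc ‖z ^ (2 * m) • C m‖ = (z ^ 2) ^ m * ‖C m‖ := by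
        rw [norm_smul, pow_mul, norm_pow, Real.norm_of_nonneg (sq_nonneg z)]
    _ ≤ (z ^ 2) ^ m * (4 ^ m * (r * ‖B‖) ^ m) := by
        gcongr
        exact (norm_catalanMatrix_le hC m).trans (by gcongr)
    _ = (z ^ 2 * (4 * r * ‖B‖)) ^ m := by ring

theorem summable_norm_pow_smul_catalanMatrix (hC : IsCatalanMatrices B C)
    {z : ℝ} (hz : z ^ 2 * (4 * r * ‖B‖) < 1) :
    Summable fun m => ‖z ^ (2 * m) • C m‖ :=
  .of_nonneg_of_le (fun _ => norm_nonneg _) (norm_pow_smul_catalanMatrix_le hC z)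
    (summable_geometric_of_lt_one (by positivity) hz)

theorem sq_smul_diagMap_sum_range_pow_smul_catalanMatrix (hC : IsCatalanMatrices B C)
    (z : ℝ) (n : ℕ) :
    z ^ 2 • diagMap (∑ k ∈ range (n + 1), z ^ (2 * k) • C k * B * (z ^ (2 * (n - k)) • C (n - k)))
      = z ^ (2 * (n + 1)) • C (n + 1) := by
  have hterm : ∀ k ∈ range (n + 1), z ^ (2 * k) • C k * B * (z ^ (2 * (n - k)) • C (n - k))
      = z ^ (2 * n) • (C k * B * C (n - k)) := by
    intro k hk
    have hkn : k ≤ n := Nat.lt_succ_iff.mp (mem_range.mp hk)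
    simp only [smul_mul_assoc, mul_smul_comm, smul_smul, ← pow_add]
    congr 2
    omega
  rw [sum_congr rfl hterm, ← smul_sum, ← diagMapCLM_apply, map_smul, map_sum]
  simp only [diagMapCLM_apply, ← hC.succ, smul_smul, ← pow_add]
  congr 2
  ring

theorem hasSum_pow_smul_catalanMatrix (hC : IsCatalanMatrices B C)
    {z : ℝ} (hz : z ^ 2 * (4 * r * ‖B‖) < 1) :
    HasSum (fun m => z ^ (2 * m) • C m)
      (1 + z ^ 2 • diagMap ((∑' m, z ^ (2 * m) • C m) * B * ∑' m, z ^ (2 * m) • C m)) := by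
  have hM := summable_norm_pow_smul_catalanMatrix hC hz
  have hMB : Summable fun m => ‖z ^ (2 * m) • C m * B‖ :=
    (hM.mul_right ‖B‖).of_nonneg_of_le (fun _ => norm_nonneg _) fun _ => norm_mul_le _ _
  have hsquare := hasSum_sum_range_mul_of_summable_norm hMB hM
  rw [hM.of_norm.tsum_mul_right] at hsquare
  have hshift := ((diagMapCLM r).hasSum hsquare).const_smul (z ^ 2)
  simp only [diagMapCLM_apply, sq_smul_diagMap_sum_range_pow_smul_catalanMatrix hC] at hshift
  have h0 : z ^ (2 * 0) • C 0 = 1 := by rw [hC.zero, mul_zero, pow_zero, one_smul]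
  exact h0 ▸ hshift.zero_add

end CatalanMatrices

theorem stmt10_general {r : ℕ} (B : Matrix (Fin r) (Fin r) ℝ)
    (C : ℕ → Matrix (Fin r) (Fin r) ℝ) (hC0 : C 0 = 1)
    (hCrec : ∀ n, C (n + 1) = ∑ i ∈ Finset.range (n + 1), diagMap (C i * B * C (n - i)))
    (z : ℝ) (hz : z ^ 2 * (4 * r * ‖B‖) < 1) :
    (∀ m, ‖C m‖ ≤ (catalan m : ℝ) * (r : ℝ) ^ m * ‖B‖ ^ m) ∧
    Summable (fun m : ℕ => z ^ (2 * m) • C m) ∧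
    (∑' m : ℕ, z ^ (2 * m) • C m) =
      1 + z ^ 2 • diagMap ((∑' m : ℕ, z ^ (2 * m) • C m) * B * (∑' m : ℕ, z ^ (2 * m) • C m)) := by
  have hC : IsCatalanMatrices B C := ⟨hC0, hCrec⟩
  have hM := hasSum_pow_smul_catalanMatrix hC hz
  refine ⟨fun m => ?_, hM.summable, hM.tsum_eq⟩
  simpa only [mul_pow, mul_assoc] using norm_catalanMatrix_le hC m

/-- Let `𝒞₀ = I` and `𝒞_n = ∑_{i+j=n-1} 𝒟(𝒞_i B 𝒞_j)` (the Catalan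
matrices of `B`), where `B` has nonnegative entries.  Then `‖𝒞_m‖ ≤ C_m r^m ‖B‖^m`
(`C_m` the Catalan numbers); consequently, for `|z| < (4r‖B‖)^{-1/2}` (equivalently
`z²·4r‖B‖ < 1`), the series `M(z) = ∑_m 𝒞_m z^{2m}` converges in operator norm and
satisfies `M(z) = I + 𝒟(M(z) B M(z)) z²`. -/
theorem stmt10 {r : ℕ} (B : Matrix (Fin r) (Fin r) ℝ) (hB : ∀ i j, 0 ≤ B i j)
    (C : ℕ → Matrix (Fin r) (Fin r) ℝ) (hC0 : C 0 = 1)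
    (hCrec : ∀ n, C (n + 1) = ∑ i ∈ Finset.range (n + 1), diagMap (C i * B * C (n - i)))
    (z : ℝ) (hz : z ^ 2 * (4 * r * ‖B‖) < 1) :
    (∀ m, ‖C m‖ ≤ (catalan m : ℝ) * (r : ℝ) ^ m * ‖B‖ ^ m) ∧
    Summable (fun m : ℕ => z ^ (2 * m) • C m) ∧
    (∑' m : ℕ, z ^ (2 * m) • C m) =
      1 + z ^ 2 • diagMap ((∑' m : ℕ, z ^ (2 * m) • C m) * B * (∑' m : ℕ, z ^ (2 * m) • C m)) :=
  stmt10_general B C hC0 hCrec z hz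
end

section
/- For a word $W_k = (1\,2\cdots p\,p^*\cdots 2^*\,1^*)^k$ of length $m=kp$, the number of noncrossing pair partitions of $[m]$ in which every block pairs a letter $j$ with a letter $j^*$ (noncrossing $W_k$-pairings) equals the Fuss–Catalan number $F(p,k)=\frac{1}{pk+1}\binom{pk+k}{k}$. -/
/-!
In `W_k` the letter at position `i` can be paired with the letter at position `j` exactly when
`2 p ∣ i + j + 1`. Cutting a noncrossing pairing along the block of its first point leaves two
independent noncrossing pairings, inside and outside that block. Since noncrossing pairings of a
sequence are those of the same points placed on a circle, rotating a word does not change its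
count, so every rotation of `W_t` has as many pairings as `W_t` itself.

Let `A_t` count the pairings of `W_t` and `S_j(t)` those of `W_{t+1}` with `p - j` letters cut off
at each end. Cutting along the first block gives `S_0 = A`, `S_p(t) = A_{t+1}` and
`S_{j+1}(t) = ∑_s S_j(s) A_{t-s}`. The Raney numbers satisfy `∑_s R_r(s) R_1(t-s) = R_{r+1}(t)`,
so by induction `S_j(t) = R_{j+1}(t)` and `A_{t+1} = R_{p+1}(t) = R_1(t+1)`, which is the
Fuss–Catalan number.
-/

/-- `f` encodes a noncrossing pair partition of `[m]` (identified with `Fin m`):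
`f` is a fixed-point-free involution whose blocks `{i, f i}` do not cross. -/
def IsNCPairing {m : ℕ} (f : Fin m → Fin m) : Prop :=
  (∀ i, f (f i) = i) ∧ (∀ i, f i ≠ i) ∧
  ∀ i j : Fin m, i < j → j < f i → f i < f j → False

instance {m : ℕ} : DecidablePred (IsNCPairing (m := m)) := fun f => by
  unfold IsNCPairing; infer_instance

/-- The letter of the word `W_k = (1 2 ⋯ p p* ⋯ 2* 1*)^k` at (0-based) position `i`:
a pair (letter number, starred?). -/
def wordLabel (p : ℕ) (i : ℕ) : ℕ × Bool :=
  let s := i % (2*p)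
  if s < p then (s + 1, false) else (2*p - s, true)

/-- `f` is a noncrossing `W_k`-pairing: a noncrossing pair partition all of whose
blocks join a position labeled `j` with a position labeled `j*`. -/
def IsWkPairing (p : ℕ) {m : ℕ} (f : Fin m → Fin m) : Prop :=
  IsNCPairing f ∧ ∀ i : Fin m,
    (wordLabel p (f i)).1 = (wordLabel p i).1 ∧
    (wordLabel p (f i)).2 = !(wordLabel p i).2

instance {p m : ℕ} : DecidablePred (IsWkPairing p (m := m)) := fun f => by
  unfold IsWkPairing; infer_instance

namespace IsNCPairing

variable {N : ℕ} {f : Fin N → Fin N}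

lemma injective (hf : IsNCPairing f) : f.Injective :=
  Function.Involutive.injective hf.1

lemma apply_mem_Ioo (hf : IsNCPairing f) {i x : Fin N} (hx : x ∈ Set.Ioo i (f i)) :
    f x ∈ Set.Ioo i (f i) := by
  obtain ⟨hinv, -, hnc⟩ := hf
  obtain ⟨hix, hxi⟩ := hx
  have hne_left : i ≠ f x := fun h => hxi.ne (by rw [h, hinv])
  have hne_right : f x ≠ f i := fun h => hix.ne' (by rw [← hinv x, h, hinv])
  exact ⟨lt_of_le_of_ne (not_lt.1 fun h => hnc _ _ h (by rwa [hinv]) (by rwa [hinv])) hne_left,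
    lt_of_le_of_ne (not_lt.1 fun h => hnc _ _ hix hxi h) hne_right⟩

lemma apply_notMem_Icc (hf : IsNCPairing f) {i x : Fin N} (hx : x ∉ Set.Icc i (f i)) :
    f x ∉ Set.Icc i (f i) := by
  rintro ⟨h1, h2⟩
  rcases h1.eq_or_lt with h1' | h1'
  · exact hx (by rw [← hf.1 x, ← h1']; exact ⟨h1.trans h2, le_rfl⟩)
  rcases h2.eq_or_lt with h2' | h2'
  · exact hx (by rw [hf.injective h2']; exact ⟨le_rfl, h1.trans h2⟩)
  · exact hx (by simpa [hf.1 x] using Set.Ioo_subset_Icc_self (hf.apply_mem_Ioo ⟨h1', h2'⟩))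

end IsNCPairing

section Restrict

variable {N a L : ℕ} {f : Fin N → Fin N}

def restrictWindow (f : Fin N → Fin N) (a L : ℕ) (hL : a + L ≤ N)
    (hf : ∀ x : Fin N, a ≤ x.val → x.val < a + L → a ≤ (f x).val ∧ (f x).val < a + L)
    (x : Fin L) : Fin L :=
  ⟨(f ⟨x + a, by omega⟩).val - a, by
    have := hf ⟨x + a, by omega⟩ (by simp) (by simp; omega); omega⟩

variable (hL : a + L ≤ N)
  (hf : ∀ x : Fin N, a ≤ x.val → x.val < a + L → a ≤ (f x).val ∧ (f x).val < a + L)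

lemma restrictWindow_add (x : Fin L) :
    (⟨(restrictWindow f a L hL hf x).val + a, by omega⟩ : Fin N) = f ⟨x + a, by omega⟩ := by
  have := hf ⟨x + a, by omega⟩ (by simp) (by simp; omega)
  ext; simp only [restrictWindow]; omega

lemma IsNCPairing.restrictWindow (h : IsNCPairing f) :
    IsNCPairing (_root_.restrictWindow f a L hL hf) := by
  obtain ⟨hinv, hne, hnc⟩ := h
  have hval : ∀ x : Fin L,
      (_root_.restrictWindow f a L hL hf x).val + a = (f ⟨x + a, by omega⟩).val :=
    fun x => congrArg Fin.val (restrictWindow_add hL hf x)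
  refine ⟨fun x => ?_, fun x hx => ?_, fun x y hxy h1 h2 => ?_⟩
  · ext
    have := hval (_root_.restrictWindow f a L hL hf x)
    rw [restrictWindow_add, hinv] at this
    simpa using this
  · exact hne ⟨x + a, by omega⟩ (Fin.ext (by rw [← hval, hx]))
  · rw [Fin.lt_def] at hxy h1 h2
    exact hnc ⟨x + a, by omega⟩ ⟨y + a, by omega⟩ (by rw [Fin.lt_def]; simp only; omega)
      (by simp only [Fin.lt_def, ← hval]; omega) (by simp only [Fin.lt_def, ← hval]; omega)

lemma restrictWindow_compat {R : ℕ → ℕ → Prop} (hR : ∀ i : Fin N, R i (f i)) (x : Fin L) :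
    R (x + a) (restrictWindow f a L hL hf x + a) := by
  simpa [← restrictWindow_add hL hf x] using hR ⟨x + a, by omega⟩

end Restrict

section Glue

variable {n j : ℕ}

lemma Fin.firstArc_cases (hj : j < n) (i : Fin (n + 1)) :
    i = 0 ∨ i = ⟨j + 1, by omega⟩ ∨ (∃ x : Fin j, i = ⟨x + 1, by omega⟩) ∨
      ∃ x : Fin (n - j - 1), i = ⟨x + (j + 2), by omega⟩ := by
  rcases Nat.lt_trichotomy i.val (j + 1) with h | h | h
  · rcases Nat.eq_zero_or_pos i.val with h0 | h0
    · exact .inl (Fin.ext h0)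
    · exact .inr (.inr (.inl ⟨⟨i - 1, by omega⟩, Fin.ext (by simp; omega)⟩))
  · exact .inr (.inl (Fin.ext h))
  · exact .inr (.inr (.inr ⟨⟨i - (j + 2), by omega⟩, Fin.ext (by simp; omega)⟩))

def glue (hj : j < n) (g : Fin j → Fin j) (h : Fin (n - j - 1) → Fin (n - j - 1))
    (i : Fin (n + 1)) : Fin (n + 1) :=
  if h0 : i.val = 0 then ⟨j + 1, by omega⟩
  else if hc : i.val = j + 1 then 0
  else if hi : i.val < j + 1 then
    ⟨g ⟨i - 1, by omega⟩ + 1, by have := (g ⟨i - 1, by omega⟩).isLt; omega⟩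
  else
    ⟨h ⟨i - (j + 2), by omega⟩ + (j + 2), by
      have := (h ⟨i - (j + 2), by omega⟩).isLt; omega⟩

variable (hj : j < n) (g : Fin j → Fin j) (h : Fin (n - j - 1) → Fin (n - j - 1))

lemma glue_zero : glue hj g h 0 = ⟨j + 1, by omega⟩ := by
  simp [glue]

lemma glue_succ_self : glue hj g h ⟨j + 1, by omega⟩ = 0 := by
  simp [glue]

lemma glue_inside (x : Fin j) :
    glue hj g h ⟨x + 1, by omega⟩ = ⟨g x + 1, by have := (g x).isLt; omega⟩ := by
  have := x.isLt
  simp [glue, show x.val ≠ j by omega]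

lemma glue_outside (x : Fin (n - j - 1)) :
    glue hj g h ⟨x + (j + 2), by omega⟩ =
      ⟨h x + (j + 2), by have := (h x).isLt; omega⟩ := by
  simp [glue, show x.val + (j + 2) ≠ j + 1 by omega, show ¬ x.val + (j + 2) < j + 1 by omega]

lemma IsNCPairing.glue (hg : IsNCPairing g) (hh : IsNCPairing h) :
    IsNCPairing (_root_.glue hj g h) := by
  refine ⟨fun i => ?_, fun i => ?_, fun a b hab h1 h2 => ?_⟩
  · rcases Fin.firstArc_cases hj i with rfl | rfl | ⟨x, rfl⟩ | ⟨x, rfl⟩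
    · rw [glue_zero, glue_succ_self]
    · rw [glue_succ_self, glue_zero]
    · simp only [glue_inside, hg.1]
    · simp only [glue_outside, hh.1]
  · rcases Fin.firstArc_cases hj i with rfl | rfl | ⟨x, rfl⟩ | ⟨x, rfl⟩
    · simp [glue_zero, Fin.ext_iff]
    · simp [glue_succ_self, Fin.ext_iff]
    · simpa [glue_inside, Fin.ext_iff] using hg.2.1 x
    · simpa [glue_outside, Fin.ext_iff] using hh.2.1 x
  rcases Fin.firstArc_cases hj a with rfl | rfl | ⟨x, rfl⟩ | ⟨x, rfl⟩ <;>
  rcases Fin.firstArc_cases hj b with rfl | rfl | ⟨y, rfl⟩ | ⟨y, rfl⟩ <;>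
  simp only [glue_zero, glue_succ_self, glue_inside, glue_outside, Fin.lt_def, Fin.val_zero]
    at hab h1 h2 <;>
  first
    | omega
    | exact hg.2.2 x y (Fin.lt_def.2 (by omega)) (Fin.lt_def.2 (by omega))
        (Fin.lt_def.2 (by omega))
    | exact hh.2.2 x y (Fin.lt_def.2 (by omega)) (Fin.lt_def.2 (by omega))
        (Fin.lt_def.2 (by omega))

end Glue

abbrev CompatPairing (n : ℕ) (R : ℕ → ℕ → Prop) : Type :=
  {f : Fin n → Fin n // IsNCPairing f ∧ ∀ i : Fin n, R i (f i)}

section FirstArc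

variable {n j : ℕ} {R : ℕ → ℕ → Prop}

lemma IsNCPairing.mapsTo_inside {f : Fin (n + 1) → Fin (n + 1)} (hf : IsNCPairing f)
    (h0 : (f 0).val = j + 1) (x : Fin (n + 1)) (hx₁ : 1 ≤ x.val) (hx₂ : x.val < 1 + j) :
    1 ≤ (f x).val ∧ (f x).val < 1 + j := by
  have := hf.apply_mem_Ioo (i := 0) (x := x)
    ⟨Fin.lt_def.2 (show 0 < x.val by omega), Fin.lt_def.2 (by omega)⟩
  simp only [Set.mem_Ioo, Fin.lt_def, Fin.val_zero] at this
  omega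

lemma IsNCPairing.mapsTo_outside {f : Fin (n + 1) → Fin (n + 1)} (hf : IsNCPairing f)
    (h0 : (f 0).val = j + 1) (x : Fin (n + 1)) (hx : j + 2 ≤ x.val) :
    j + 2 ≤ (f x).val ∧ (f x).val < j + 2 + (n - j - 1) := by
  have := hf.apply_notMem_Icc (i := 0) (x := x)
    (fun h => by rw [Set.mem_Icc, Fin.le_def, Fin.le_def] at h; omega)
  rw [Set.mem_Icc, Fin.le_def, Fin.le_def, Fin.val_zero, not_and, not_le] at this
  have := (f x).isLt
  omega

lemma glue_compat (hj : j < n) (hR : R 0 (j + 1) ∧ R (j + 1) 0)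
    (g : CompatPairing j (fun x y => R (x + 1) (y + 1)))
    (h : CompatPairing (n - j - 1) (fun x y => R (x + (j + 2)) (y + (j + 2))))
    (i : Fin (n + 1)) : R i (glue hj g.1 h.1 i) := by
  rcases Fin.firstArc_cases hj i with rfl | rfl | ⟨x, rfl⟩ | ⟨x, rfl⟩
  · simpa [glue_zero] using hR.1
  · simpa [glue_succ_self] using hR.2
  · simpa [glue_inside] using g.2.2 x
  · simpa [glue_outside] using h.2.2 x

def firstArcEquiv (hj : j < n) (hR : R 0 (j + 1) ∧ R (j + 1) 0) :
    {f : CompatPairing (n + 1) R // (f.1 0).val = j + 1} ≃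
      CompatPairing j (fun x y => R (x + 1) (y + 1)) ×
        CompatPairing (n - j - 1) (fun x y => R (x + (j + 2)) (y + (j + 2))) where
  toFun f :=
    (⟨_, f.1.2.1.restrictWindow (by omega) (f.1.2.1.mapsTo_inside f.2),
        restrictWindow_compat _ _ f.1.2.2⟩,
      ⟨_, f.1.2.1.restrictWindow (by omega) fun x hx _ => f.1.2.1.mapsTo_outside f.2 x hx,
        restrictWindow_compat _ _ f.1.2.2⟩)
  invFun gh :=
    ⟨⟨glue hj gh.1.1 gh.2.1, gh.1.2.1.glue hj _ _ gh.2.2.1, glue_compat hj hR gh.1 gh.2⟩,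
      by simp [glue_zero]⟩
  left_inv f := by
    obtain ⟨⟨f, hf, hfR⟩, h0⟩ := f
    refine Subtype.ext (Subtype.ext (funext fun i => ?_))
    rcases Fin.firstArc_cases hj i with rfl | rfl | ⟨x, rfl⟩ | ⟨x, rfl⟩
    · simp only [glue_zero]; exact Fin.ext h0.symm
    · have : f ⟨j + 1, by omega⟩ = f (f 0) := congrArg f (Fin.ext h0.symm)
      simp [glue_succ_self, this, hf.1]
    · simp only [glue_inside]
      exact restrictWindow_add _ _ x
    · simp only [glue_outside]
      exact restrictWindow_add _ _ x
  right_inv gh := by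
    obtain ⟨⟨g, -⟩, ⟨h, -⟩⟩ := gh
    ext x : 3
    · simp [restrictWindow, glue_inside]
    · simp [restrictWindow, glue_outside]

lemma card_firstArc [DecidableRel R] (hj : j < n) :
    Nat.card {f : CompatPairing (n + 1) R // (f.1 0).val = j + 1} =
      if R 0 (j + 1) ∧ R (j + 1) 0 then
        Nat.card (CompatPairing j (fun x y => R (x + 1) (y + 1))) *
          Nat.card (CompatPairing (n - j - 1) (fun x y => R (x + (j + 2)) (y + (j + 2))))
      else 0 := by
  split_ifs with hR
  · rw [Nat.card_congr (firstArcEquiv hj hR), Nat.card_prod]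
  · have : IsEmpty {f : CompatPairing (n + 1) R // (f.1 0).val = j + 1} :=
      ⟨fun ⟨⟨f, hf, hfR⟩, (h0 : (f 0).val = j + 1)⟩ =>
        hR ⟨by simpa [h0] using hfR 0, by simpa [h0, hf.1] using hfR (f 0)⟩⟩
    exact Nat.card_of_isEmpty

lemma card_compatPairing_succ [DecidableRel R] (n : ℕ) :
    Nat.card (CompatPairing (n + 1) R) = ∑ j ∈ Finset.range n,
      if R 0 (j + 1) ∧ R (j + 1) 0 then
        Nat.card (CompatPairing j (fun x y => R (x + 1) (y + 1))) *
          Nat.card (CompatPairing (n - j - 1) (fun x y => R (x + (j + 2)) (y + (j + 2))))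
      else 0 := by
  have : IsEmpty {f : CompatPairing (n + 1) R // f.1 0 = 0} := ⟨fun f => f.1.2.1.2.1 0 f.2⟩
  rw [Nat.card_congr (Equiv.sigmaFiberEquiv fun f : CompatPairing (n + 1) R => f.1 0).symm,
    Nat.card_sigma, Fin.sum_univ_succ, Nat.card_of_isEmpty, zero_add, Finset.sum_range]
  refine Finset.sum_congr rfl fun j _ => ?_
  rw [← card_firstArc j.isLt]
  exact Nat.card_congr (Equiv.subtypeEquivRight fun f => by simp [Fin.ext_iff])

end FirstArc

section Rotate

variable {m : ℕ} {f : Fin (m + 1) → Fin (m + 1)}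

lemma finRotate_val (x : Fin (m + 1)) : (finRotate (m + 1) x).val = (x.val + 1) % (m + 1) := by
  rw [finRotate_apply, Fin.val_add, Fin.val_one', Nat.add_mod_mod]

lemma finRotate_val_of_lt {x : Fin (m + 1)} (hx : x.val < m) :
    (finRotate (m + 1) x).val = x.val + 1 :=
  coe_finRotate_of_ne_last (Fin.ne_of_lt (Fin.lt_def.2 hx))

lemma finRotate_symm_val_of_pos {x : Fin (m + 1)} (hx : 0 < x.val) :
    ((finRotate (m + 1)).symm x).val = x.val - 1 :=
  coe_finRotate_symm_of_ne_zero (Fin.pos_iff_ne_zero.1 (Fin.lt_def.2 hx))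

lemma finRotate_symm_zero : (finRotate (m + 1)).symm 0 = Fin.last m :=
  (Equiv.symm_apply_eq _).2 finRotate_last.symm

lemma IsNCPairing.conj (hf : IsNCPairing f) (σ : Equiv.Perm (Fin (m + 1)))
    (hcross : ∀ g : Fin (m + 1) → Fin (m + 1), (∀ x, f (σ x) = σ (g x)) →
      ∀ a b, a < b → b < g a → g a < g b → False) :
    IsNCPairing fun x => σ.symm (f (σ x)) :=
  ⟨fun x => by simp [hf.1], fun x hx => hf.2.1 (σ x) ((Equiv.symm_apply_eq σ).1 hx),
    hcross _ fun x => by simp⟩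

lemma IsNCPairing.conj_finRotate (hf : IsNCPairing f) :
    IsNCPairing fun x => (finRotate (m + 1)).symm (f (finRotate (m + 1) x)) := by
  refine hf.conj _ fun g key a b hab h1 h2 => ?_
  -- Shifted by one, a crossing of `g` is one of `f`, unless `g b` wraps around to `0`:
  -- then the block of `f` through `0` crosses the block through `a + 1`.
  rw [Fin.lt_def] at hab h1 h2
  have hgb := (g b).isLt
  have ha := finRotate_val_of_lt (m := m) (x := a) (by omega)
  have hb := finRotate_val_of_lt (m := m) (x := b) (by omega)
  have hga := finRotate_val_of_lt (m := m) (x := g a) (by omega)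
  rcases (Nat.lt_succ_iff.1 hgb).eq_or_lt with hgb | hgb
  · have h0 : f 0 = finRotate (m + 1) b := by
      rw [← hf.1 (finRotate _ b), key, show g b = Fin.last m from Fin.ext hgb, finRotate_last]
    exact hf.2.2 0 (finRotate _ a) (Fin.lt_def.2 (by simp only [Fin.val_zero]; omega))
      (Fin.lt_def.2 (by rw [h0]; omega)) (Fin.lt_def.2 (by rw [h0, key]; omega))
  · have hgb' := finRotate_val_of_lt (m := m) (x := g b) hgb
    exact hf.2.2 (finRotate _ a) (finRotate _ b) (Fin.lt_def.2 (by omega))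
      (Fin.lt_def.2 (by rw [key]; omega)) (Fin.lt_def.2 (by rw [key, key]; omega))

lemma IsNCPairing.conj_finRotate_symm (hf : IsNCPairing f) :
    IsNCPairing fun x => finRotate (m + 1) (f ((finRotate (m + 1)).symm x)) := by
  refine hf.conj (finRotate (m + 1)).symm fun h key a b hab h1 h2 => ?_
  rw [Fin.lt_def] at hab h1 h2
  have hhb := (h b).isLt
  have hb := finRotate_symm_val_of_pos (m := m) (x := b) (by omega)
  have hha := finRotate_symm_val_of_pos (m := m) (x := h a) (by omega)
  have hhb' := finRotate_symm_val_of_pos (m := m) (x := h b) (by omega)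
  rcases Nat.eq_zero_or_pos a.val with ha | ha
  · have hlast : f ((finRotate (m + 1)).symm (h a)) = Fin.last m := by
      rw [← key, hf.1, show a = 0 from Fin.ext ha, finRotate_symm_zero]
    exact hf.2.2 ((finRotate _).symm b) ((finRotate _).symm (h a)) (Fin.lt_def.2 (by omega))
      (Fin.lt_def.2 (by rw [key]; omega))
      (Fin.lt_def.2 (by rw [key, hlast, Fin.val_last]; omega))
  · have ha' := finRotate_symm_val_of_pos (m := m) (x := a) ha
    exact hf.2.2 ((finRotate _).symm a) ((finRotate _).symm b) (Fin.lt_def.2 (by omega))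
      (Fin.lt_def.2 (by rw [key]; omega)) (Fin.lt_def.2 (by rw [key, key]; omega))

lemma card_compatPairing_rotate (R : ℕ → ℕ → Prop) :
    Nat.card (CompatPairing (m + 1) fun x y => R ((x + 1) % (m + 1)) ((y + 1) % (m + 1))) =
      Nat.card (CompatPairing (m + 1) R) := by
  refine Nat.card_congr
    { toFun := fun f => ⟨fun x => finRotate _ (f.1 ((finRotate _).symm x)),
        f.2.1.conj_finRotate_symm, fun i => ?_⟩
      invFun := fun g => ⟨fun x => (finRotate _).symm (g.1 (finRotate _ x)),
        g.2.1.conj_finRotate, fun i => ?_⟩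
      left_inv := fun f => by ext; simp
      right_inv := fun g => by ext; simp }
  · have := f.2.2 ((finRotate _).symm i)
    simpa only [← finRotate_val, Equiv.apply_symm_apply] using this
  · simpa only [← finRotate_val, Equiv.apply_symm_apply] using g.2.2 (finRotate _ i)

end Rotate

noncomputable def arcSumCount (q r n : ℕ) : ℕ :=
  Nat.card (CompatPairing n fun x y => q ∣ x + y + r)

section ArcSum

variable {q r n : ℕ}

lemma arcSumCount_zero (q r : ℕ) : arcSumCount q r 0 = 1 :=
  Nat.card_eq_one_iff_unique.2
    ⟨⟨fun _ _ => Subtype.ext (funext fun i => i.elim0)⟩,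
      ⟨⟨fun i => i.elim0, ⟨fun i => i.elim0, fun i => i.elim0, fun i => i.elim0⟩,
        fun i => i.elim0⟩⟩⟩

lemma arcSumCount_add_mul (c : ℕ) : arcSumCount q (r + q * c) n = arcSumCount q r n := by
  simp_rw [arcSumCount, ← add_assoc, Nat.dvd_add_left (dvd_mul_right q c)]

lemma arcSumCount_add_two (hq : q ∣ n) : arcSumCount q (r + 2) n = arcSumCount q r n := by
  rcases n with _ | m
  · rw [arcSumCount_zero, arcSumCount_zero]
  rw [arcSumCount, arcSumCount]
  conv_rhs => rw [← card_compatPairing_rotate]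
  congr! 4 with x y
  have hx := (Nat.mod_modEq (x + 1) (m + 1)).of_dvd hq
  have hy := (Nat.mod_modEq (y + 1) (m + 1)).of_dvd hq
  rw [((hx.add hy).add_right r).dvd_iff dvd_rfl]
  ring_nf

lemma arcSumCount_add_two_mul (hq : q ∣ n) (c : ℕ) :
    arcSumCount q (r + 2 * c) n = arcSumCount q r n := by
  induction c with
  | zero => rfl
  | succ c ih => rw [mul_add, mul_one, ← add_assoc, arcSumCount_add_two hq, ih]

lemma arcSumCount_succ (q r n : ℕ) :
    arcSumCount q r (n + 1) = ∑ j ∈ Finset.range n,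
      if q ∣ j + 1 + r then arcSumCount q (r + 2) j * arcSumCount q (r + 2 * j + 4) (n - j - 1)
      else 0 := by
  rw [arcSumCount, card_compatPairing_succ]
  refine Finset.sum_congr rfl fun j _ => ?_
  simp only [zero_add, add_zero, and_self, arcSumCount]
  congr! 6 with x y x y <;> ring_nf

end ArcSum

lemma dvd_add_sub_iff_mod_eq {q d : ℕ} (hd : d < q) (x : ℕ) :
    q ∣ x + (q - d) ↔ x % q = d := by
  have hmod : x % q = d ↔ x ≡ d [MOD q] := by rw [Nat.ModEq, Nat.mod_eq_of_lt hd]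
  have hqd : d + (q - d) ≡ 0 [MOD q] := by
    rw [Nat.add_sub_cancel' hd.le]
    exact Nat.modEq_zero_iff_dvd.2 dvd_rfl
  rw [← Nat.modEq_zero_iff_dvd, hmod]
  exact ⟨fun h => Nat.ModEq.add_right_cancel' _ (h.trans hqd.symm),
    fun h => (h.add_right _).trans hqd⟩

lemma sum_range_ite_mod_eq {M : Type*} [AddCommMonoid M] {q d : ℕ} (hd : d < q) (t : ℕ)
    (F : ℕ → M) :
    ∑ x ∈ Finset.range (q * t + d + 1), (if x % q = d then F x else 0) =
      ∑ s ∈ Finset.range (t + 1), F (q * s + d) := by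
  have hq : 0 < q := by omega
  rw [← Finset.sum_filter]
  have himage : (Finset.range (q * t + d + 1)).filter (· % q = d) =
      (Finset.range (t + 1)).image (q * · + d) := by
    ext x
    simp only [Finset.mem_filter, Finset.mem_range, Finset.mem_image]
    constructor
    · rintro ⟨hx, rfl⟩
      refine ⟨x / q, ?_, Nat.div_add_mod x q⟩
      have := Nat.div_add_mod x q
      have : q * (x / q) ≤ q * t := by omega
      exact Nat.lt_succ_of_le (Nat.le_of_mul_le_mul_left this hq)
    · rintro ⟨s, hs, rfl⟩
      have : q * s ≤ q * t := Nat.mul_le_mul_left q (Nat.lt_succ_iff.1 hs)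
      exact ⟨by omega, by rw [Nat.mul_add_mod, Nat.mod_eq_of_lt hd]⟩
  rw [himage, Finset.sum_image fun s _ s' _ h => Nat.eq_of_mul_eq_mul_left hq (by simpa using h)]

lemma wordLabel_match_iff (p i j : ℕ) :
    ((wordLabel p j).1 = (wordLabel p i).1 ∧ (wordLabel p j).2 = !(wordLabel p i).2) ↔
      2 * p ∣ i + j + 1 := by
  rcases Nat.eq_zero_or_pos p with rfl | hp
  · simp [wordLabel]
  have ha := Nat.mod_lt i (show 0 < 2 * p by omega)
  have hb := Nat.mod_lt j (show 0 < 2 * p by omega)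
  have hmod : i + j + 1 ≡ i % (2 * p) + j % (2 * p) + 1 [MOD 2 * p] :=
    ((Nat.mod_modEq i _).symm.add (Nat.mod_modEq j _).symm).add_right 1
  rw [hmod.dvd_iff dvd_rfl]
  have hdvd :
      2 * p ∣ i % (2 * p) + j % (2 * p) + 1 ↔ i % (2 * p) + j % (2 * p) + 1 = 2 * p := by
    refine ⟨fun ⟨c, hc⟩ => ?_, fun h => ⟨1, by omega⟩⟩
    rcases c with _ | _ | c
    · omega
    · omega
    · nlinarith
  rw [hdvd]
  unfold wordLabel
  by_cases h1 : i % (2 * p) < p <;> by_cases h2 : j % (2 * p) < p <;> simp [h1, h2] <;> omega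

lemma card_isWkPairing (p k : ℕ) :
    Nat.card {f : Fin (2 * p * k) → Fin (2 * p * k) // IsWkPairing p f} =
      arcSumCount (2 * p) 1 (2 * p * k) :=
  Nat.card_congr <| Equiv.subtypeEquivRight fun _ =>
    and_congr_right fun _ => forall_congr' fun i => wordLabel_match_iff p i _

/-- The Raney numbers `R_r(n) = r / ((p + 1) n + r) * C((p + 1) n + r, n)` of Fuss parameter
`p + 1`, written without division. -/
def raney (p r : ℕ) : ℕ → ℚ
  | 0 => 1
  | n + 1 => ((p + 1) * n + p + r).choose (n + 1) - p * ((p + 1) * n + p + r).choose n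

section Raney

variable {p : ℕ}

@[simp] lemma raney_zero_right (r : ℕ) : raney p r 0 = 1 := rfl

lemma raney_succ_right (r n : ℕ) : raney p r (n + 1) =
    ((p + 1) * n + p + r).choose (n + 1) - p * ((p + 1) * n + p + r).choose n := rfl

lemma raney_zero_succ (n : ℕ) : raney p 0 (n + 1) = 0 := by
  have h := Nat.choose_succ_right_eq ((p + 1) * n + p) n
  rw [Nat.sub_eq_of_eq_add (show (p + 1) * n + p = p * (n + 1) + n by ring)] at h
  have : ((p + 1) * n + p).choose (n + 1) = p * ((p + 1) * n + p).choose n :=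
    Nat.eq_of_mul_eq_mul_right (show 0 < n + 1 by omega) (by rw [h]; ring)
  simp [raney_succ_right, this]

lemma raney_succ_succ (r n : ℕ) :
    raney p (r + 1) (n + 1) = raney p r (n + 1) + raney p (r + p + 1) n := by
  cases n with
  | zero =>
    simp only [raney_succ_right, raney_zero_right, mul_zero, zero_add, Nat.choose_zero_right,
      Nat.choose_one_right]
    push_cast
    ring
  | succ n =>
    simp only [raney_succ_right]
    rw [show (p + 1) * (n + 1) + p + (r + 1) = (p + 1) * (n + 1) + p + r + 1 by ring,
      show (p + 1) * n + p + (r + p + 1) = (p + 1) * (n + 1) + p + r by ring,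
      Nat.choose_succ_succ _ (n + 1), Nat.choose_succ_succ _ n]
    push_cast
    ring

lemma raney_one_succ (n : ℕ) : raney p 1 (n + 1) = raney p (p + 1) n := by
  simpa [raney_zero_succ] using raney_succ_succ (p := p) 0 n

lemma sum_range_raney_mul_raney_one (n r : ℕ) :
    ∑ s ∈ Finset.range (n + 1), raney p r s * raney p 1 (n - s) = raney p (r + 1) n := by
  induction n generalizing r with
  | zero => simp
  | succ n ih =>
    induction r with
    | zero => simp [Finset.sum_range_succ', raney_zero_succ]
    | succ r ihr =>
      rw [Finset.sum_range_succ'] at ihr ⊢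
      simp only [Nat.add_sub_add_right, raney_succ_succ r, add_mul, Finset.sum_add_distrib,
        raney_zero_right, ih (r + p + 1)] at ihr ⊢
      rw [add_right_comm, ihr, raney_succ_succ (r + 1) n, raney_succ_succ r n]
      ring_nf

lemma raney_one_eq (k : ℕ) :
    raney p 1 k = 1 / ((p * k + 1 : ℕ) : ℚ) * (p * k + k).choose k := by
  cases k with
  | zero => simp
  | succ n =>
    rw [raney_succ_right, show (p + 1) * n + p + 1 = p * (n + 1) + (n + 1) by ring]
    set N := p * (n + 1) + (n + 1)
    have h := Nat.choose_succ_right_eq N n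
    rw [show N - n = p * (n + 1) + 1 by omega] at h
    have hq : (N.choose (n + 1) : ℚ) * (n + 1) = (N.choose n : ℚ) * (p * (n + 1) + 1) := by
      exact_mod_cast h
    field_simp
    push_cast
    linear_combination (p : ℚ) * hq

end Raney

/-- The number of noncrossing `W`-pairings of the word `W_{t+1}` with its first and last `p - j`
letters removed: position `x` of this word is position `x + (p - j)` of `W_{t+1}`. -/
noncomputable def sliceCount (p j t : ℕ) : ℕ :=
  arcSumCount (2 * p) (2 * (p - j) + 1) (2 * p * t + 2 * j)

lemma sliceCount_zero (p t : ℕ) : sliceCount p 0 t = arcSumCount (2 * p) 1 (2 * p * t) := by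
  rw [sliceCount, show 2 * (p - 0) + 1 = 1 + 2 * p * 1 by omega, arcSumCount_add_mul, mul_zero,
    add_zero]

lemma sliceCount_self (p t : ℕ) :
    sliceCount p p t = arcSumCount (2 * p) 1 (2 * p * (t + 1)) := by
  rw [sliceCount, Nat.sub_self, mul_add, mul_one]

lemma sliceCount_succ {p j : ℕ} (hj : j < p) (t : ℕ) :
    sliceCount p (j + 1) t = ∑ s ∈ Finset.range (t + 1),
      sliceCount p j s * arcSumCount (2 * p) 1 (2 * p * (t - s)) := by
  have hd : 2 * j < 2 * p := by omega
  -- The first letter pairs with the positions `2 p s + 2 j`, and what lies outside such a block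
  -- is a rotation of `W_{t-s}`.
  have hpartner : ∀ x, 2 * p ∣ x + 1 + (2 * (p - (j + 1)) + 1) ↔ x % (2 * p) = 2 * j := by
    intro x
    rw [← dvd_add_sub_iff_mod_eq hd,
      show x + 1 + (2 * (p - (j + 1)) + 1) = x + (2 * p - 2 * j) by omega]
  rw [sliceCount, show 2 * p * t + 2 * (j + 1) = 2 * p * t + 2 * j + 1 + 1 by ring,
    arcSumCount_succ]
  simp_rw [hpartner]
  rw [sum_range_ite_mod_eq hd]
  refine Finset.sum_congr rfl fun s hs => ?_
  have hst : 2 * p * s ≤ 2 * p * t :=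
    Nat.mul_le_mul_left _ (Nat.lt_succ_iff.1 (Finset.mem_range.1 hs))
  have hlen : 2 * p * t + 2 * j + 1 - (2 * p * s + 2 * j) - 1 = 2 * p * (t - s) := by
    rw [Nat.mul_sub]; omega
  rw [hlen, show 2 * (p - (j + 1)) + 1 + 2 * (2 * p * s + 2 * j) + 4 =
      1 + 2 * (p + j + 1 + 2 * p * s) by omega, arcSumCount_add_two_mul (dvd_mul_right _ _),
    show 2 * (p - (j + 1)) + 1 + 2 = 2 * (p - j) + 1 by omega, sliceCount]

lemma sliceCount_eq_raney {p t : ℕ}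
    (hA : ∀ s ≤ t, (arcSumCount (2 * p) 1 (2 * p * s) : ℚ) = raney p 1 s) :
    ∀ j ≤ p, ∀ s ≤ t, (sliceCount p j s : ℚ) = raney p (j + 1) s := by
  intro j
  induction j with
  | zero => intro _ s hs; rw [sliceCount_zero, hA s hs]
  | succ j ih =>
    intro hj s hs
    rw [sliceCount_succ (by omega), ← sum_range_raney_mul_raney_one, Nat.cast_sum]
    refine Finset.sum_congr rfl fun s' hs' => ?_
    have := Finset.mem_range.1 hs'
    rw [Nat.cast_mul, ih (by omega) s' (by omega), hA (s - s') (by omega)]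

theorem arcSumCount_eq_raney (p t : ℕ) :
    (arcSumCount (2 * p) 1 (2 * p * t) : ℚ) = raney p 1 t := by
  induction t using Nat.strong_induction_on with
  | _ t ih =>
    rcases t with _ | t
    · simp [arcSumCount_zero]
    · rw [← sliceCount_self, sliceCount_eq_raney (fun s hs => ih s (by omega)) p le_rfl t le_rfl,
        raney_one_succ]

theorem stmt13_general (p k : ℕ) :
    (Nat.card {f : Fin (2*p*k) → Fin (2*p*k) // IsWkPairing p f} : ℚ) =
      (1 / ((p*k+1 : ℕ) : ℚ)) * ((p*k+k).choose k) := by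
  rw [card_isWkPairing, arcSumCount_eq_raney, raney_one_eq]

/-- The number of noncrossing `W_k`-pairings of the word
`W_k = (1 2 ⋯ p p* ⋯ 2* 1*)^k` (of `2pk` positions, `kp` blocks) equals
the Fuss–Catalan number `F(p,k) = (1/(pk+1)) * C(pk+k, k)`. -/
theorem stmt13 (p k : ℕ) (hp : 1 ≤ p) :
    (Nat.card {f : Fin (2*p*k) → Fin (2*p*k) // IsWkPairing p f} : ℚ) =
      (1 / ((p*k+1 : ℕ) : ℚ)) * ((p*k+k).choose k) :=
  stmt13_general p k
end

section
/- Let $\mu$ be a compactly supported probability measure on $\mathbb{R}$ and $s>0$, and let $\mu_s = U_s\mu$ be the probability measure whose Cauchy transform is $G_{\mu_s}(z) = s\,G_\mu(z) + (1-s)/z$. Then the S-transform satisfies $S_{\mu_s}(z) = \frac{1+z}{s+z}\, S_\mu(z/s)$. -/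
/-!
For non-real `w` one has `ψ_ν(w) = w⁻¹ G_ν(w⁻¹) - 1`, so the relation between the Cauchy
transforms becomes `ψ_{μ_s} = s ψ_μ` off the real axis. Since `ψ_{μ_s} ∘ χ_{μ_s} = id`, the
analytic map `χ_{μ_s}` is not constant, so by the open mapping theorem it takes non-real values
at points arbitrarily close to `0`; there `ψ_μ (χ_{μ_s} z) = z / s`, and the identity theorem
extends this to a neighbourhood of `0`. As `μ` is compactly supported, `ψ_μ` is analytic at `0`
with derivative the mean of `μ`, which is non-zero, so `ψ_μ` is injective near `0`. Comparing
with `ψ_μ (χ_μ (z / s)) = z / s` gives `χ_{μ_s}(z) = χ_μ(z / s)`, and the formula for the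
S-transform follows by algebra.
-/

open MeasureTheory Filter

noncomputable def momentSeries (μ : Measure ℝ) (z : ℂ) : ℂ :=
  ∫ x, (z * (x : ℂ)) / (1 - z * (x : ℂ)) ∂μ

open Metric Set
open scoped Topology

theorem ne_zero_of_im_ne_zero {w : ℂ} (hw : w.im ≠ 0) : w ≠ 0 := by
  rintro rfl
  simp at hw

theorem inv_im_ne_zero {w : ℂ} (hw : w.im ≠ 0) : w⁻¹.im ≠ 0 := by
  simp [Complex.inv_im, hw, ne_zero_of_im_ne_zero hw]

theorem one_sub_mul_ofReal_ne_zero {w : ℂ} (hw : w.im ≠ 0) (x : ℝ) : 1 - w * x ≠ 0 := by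
  intro h
  have him := congrArg Complex.im h
  simp only [Complex.sub_im, Complex.one_im, Complex.mul_im, Complex.ofReal_im,
    Complex.ofReal_re, mul_zero, zero_add, zero_sub, Complex.zero_im, neg_eq_zero,
    mul_eq_zero, hw, false_or] at him
  simp [him] at h

theorem momentSeries_zero (μ : Measure ℝ) : momentSeries μ 0 = 0 := by
  simp [momentSeries]

theorem integrable_inv_sub_ofReal (ν : Measure ℝ) [IsFiniteMeasure ν] {z : ℂ} (hz : z.im ≠ 0) :
    Integrable (fun x : ℝ => (z - x)⁻¹) ν := by
  refine (integrable_const |z.im|⁻¹).mono' (by fun_prop) (.of_forall fun x => ?_)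
  rw [norm_inv]
  exact inv_anti₀ (abs_pos.mpr hz) (by simpa using Complex.abs_im_le_norm (z - x))

theorem momentSeries_eq_inv_mul_cauchy (ν : Measure ℝ) [IsProbabilityMeasure ν] {w : ℂ}
    (hw : w.im ≠ 0) :
    momentSeries ν w = w⁻¹ * ∫ x, (w⁻¹ - (x : ℂ))⁻¹ ∂ν - 1 := by
  have hw0 := ne_zero_of_im_ne_zero hw
  have hpt : ∀ x : ℝ, w * x / (1 - w * x) = w⁻¹ * (w⁻¹ - x)⁻¹ - 1 := fun x => by
    have hden := one_sub_mul_ofReal_ne_zero hw x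
    rw [show w⁻¹ - x = w⁻¹ * (1 - w * x) by field_simp]
    field_simp
    ring
  simp_rw [momentSeries, hpt]
  rw [integral_sub ((integrable_inv_sub_ofReal ν (inv_im_ne_zero hw)).const_mul _)
    (integrable_const _), integral_const_mul]
  simp

theorem momentSeries_eq_mul_of_cauchy_eq (μ μs : Measure ℝ) [IsProbabilityMeasure μ]
    [IsProbabilityMeasure μs] (s : ℂ)
    (hG : ∀ z : ℂ, z.im ≠ 0 →
      ∫ x, (z - (x : ℂ))⁻¹ ∂μs = s * ∫ x, (z - (x : ℂ))⁻¹ ∂μ + (1 - s) / z)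
    {w : ℂ} (hw : w.im ≠ 0) :
    momentSeries μs w = s * momentSeries μ w := by
  rw [momentSeries_eq_inv_mul_cauchy μs hw, momentSeries_eq_inv_mul_cauchy μ hw,
    hG _ (inv_im_ne_zero hw)]
  field_simp [ne_zero_of_im_ne_zero hw]
  ring

theorem exists_pos_ae_abs_le {μ : Measure ℝ} {K : Set ℝ} (hK : IsCompact K) (hsupp : μ Kᶜ = 0) :
    ∃ R > 0, ∀ᵐ x ∂μ, |x| ≤ R := by
  obtain ⟨R, hR0, hR⟩ := hK.isBounded.exists_pos_norm_le
  have hK' : ∀ᵐ x ∂μ, x ∈ K := mem_ae_iff.mpr hsupp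
  exact ⟨R, hR0, hK'.mono hR⟩

theorem half_le_norm_one_sub_mul {R : ℝ} (hR : 0 < R) {z : ℂ} (hz : z ∈ ball (0 : ℂ) (2 * R)⁻¹)
    {x : ℝ} (hx : |x| ≤ R) : 1 / 2 ≤ ‖1 - z * x‖ := by
  have hzx : ‖z * x‖ ≤ 1 / 2 := calc
    ‖z * x‖ = ‖z‖ * |x| := by simp
    _ ≤ (2 * R)⁻¹ * R := by gcongr; exact (mem_ball_zero_iff.mp hz).le
    _ = 1 / 2 := by field_simp
  linarith [norm_sub_norm_le (1 : ℂ) (z * x), norm_one (α := ℂ)]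

theorem hasDerivAt_momentSeries {μ : Measure ℝ} [IsFiniteMeasure μ] {R : ℝ} (hR0 : 0 < R)
    (hR : ∀ᵐ x ∂μ, |x| ≤ R) {z₀ : ℂ} (hz₀ : z₀ ∈ ball (0 : ℂ) (2 * R)⁻¹) :
    HasDerivAt (momentSeries μ) (∫ x, (x : ℂ) / (1 - z₀ * x) ^ 2 ∂μ) z₀ := by
  have hden : ∀ᵐ (x : ℝ) ∂μ, ∀ z ∈ ball (0 : ℂ) (2 * R)⁻¹, 1 / 2 ≤ ‖1 - z * x‖ :=
    hR.mono fun x hx z hz => half_le_norm_one_sub_mul hR0 hz hx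
  have hF_int : Integrable (fun x : ℝ => z₀ * x / (1 - z₀ * x)) μ := by
    refine (integrable_const (3 : ℝ)).mono' (Measurable.aestronglyMeasurable (by fun_prop))
      (hden.mono fun x hx => ?_)
    have hx := hx z₀ hz₀
    rw [norm_div, div_le_iff₀ (by linarith)]
    calc ‖z₀ * x‖ = ‖1 - (1 - z₀ * x)‖ := by ring_nf
      _ ≤ 1 + ‖1 - z₀ * x‖ := by simpa using norm_sub_le (1 : ℂ) (1 - z₀ * x)
      _ ≤ 3 * ‖1 - z₀ * x‖ := by linarith
  have hF'_bound : ∀ᵐ (x : ℝ) ∂μ, ∀ z ∈ ball (0 : ℂ) (2 * R)⁻¹,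
      ‖(x : ℂ) / (1 - z * x) ^ 2‖ ≤ 4 * R := by
    filter_upwards [hR, hden] with x hx hx' z hz
    have := hx' z hz
    rw [norm_div, norm_pow, div_le_iff₀ (by positivity)]
    calc ‖(x : ℂ)‖ ≤ R := by simpa using hx
      _ ≤ 4 * R * ‖1 - z * x‖ ^ 2 := by nlinarith [mul_le_mul this this (by norm_num) (by linarith)]
  have hF_deriv : ∀ᵐ (x : ℝ) ∂μ, ∀ z ∈ ball (0 : ℂ) (2 * R)⁻¹,
      HasDerivAt (fun w : ℂ => w * x / (1 - w * x)) ((x : ℂ) / (1 - z * x) ^ 2) z := by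
    filter_upwards [hden] with x hx z hz
    have hne : 1 - z * x ≠ 0 := norm_pos_iff.mp (by linarith [hx z hz])
    have hlin : HasDerivAt (fun w : ℂ => w * x) x z := by
      simpa using (hasDerivAt_id z).mul_const (x : ℂ)
    exact (hlin.div ((hasDerivAt_const z 1).sub hlin) hne).congr_deriv
      (by simp only [Pi.sub_apply]; ring)
  exact (hasDerivAt_integral_of_dominated_loc_of_deriv_le (isOpen_ball.mem_nhds hz₀)
    (.of_forall fun _ => Measurable.aestronglyMeasurable (by fun_prop)) hF_int
    (Measurable.aestronglyMeasurable (by fun_prop)) hF'_bound (integrable_const _)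
    hF_deriv).2

theorem analyticAt_momentSeries_zero {μ : Measure ℝ} [IsFiniteMeasure μ] {R : ℝ} (hR0 : 0 < R)
    (hR : ∀ᵐ x ∂μ, |x| ≤ R) : AnalyticAt ℂ (momentSeries μ) 0 :=
  DifferentiableOn.analyticAt
    (fun _ hz => (hasDerivAt_momentSeries hR0 hR hz).differentiableAt.differentiableWithinAt)
    (isOpen_ball.mem_nhds (mem_ball_self (by positivity)))

theorem hasStrictDerivAt_momentSeries_zero {μ : Measure ℝ} [IsFiniteMeasure μ] {R : ℝ}
    (hR0 : 0 < R) (hR : ∀ᵐ x ∂μ, |x| ≤ R) :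
    HasStrictDerivAt (momentSeries μ) (∫ x, x ∂μ : ℝ) 0 := by
  have hderiv := (hasDerivAt_momentSeries hR0 hR (mem_ball_self (by positivity))).deriv
  simp only [zero_mul, sub_zero, one_pow, div_one] at hderiv
  rw [← integral_complex_ofReal, ← hderiv]
  exact (analyticAt_momentSeries_zero hR0 hR).hasStrictDerivAt

theorem AnalyticAt.frequently_im_ne {g : ℂ → ℂ} {a : ℂ} (hg : AnalyticAt ℂ g a)
    (hconst : ¬∀ᶠ z in 𝓝 a, g z = g a) : ∃ᶠ z in 𝓝 a, (g z).im ≠ (g a).im := by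
  intro hreal
  have hline : Complex.im ⁻¹' {(g a).im} ∈ 𝓝 (g a) :=
    (hg.eventually_constant_or_nhds_le_map_nhds.resolve_left hconst)
      (hreal.mono fun z hz => not_not.mp hz)
  have := interior_mem_nhds.mpr hline
  simp [Complex.interior_preimage_im, interior_singleton] at this

theorem frequently_im_ne_zero_of_rightInverse {ψ χ : ℂ → ℂ} (hχ : AnalyticAt ℂ χ 0)
    (hχ0 : χ 0 = 0) (hψ0 : ψ 0 = 0) (hψχ : ∀ᶠ z in 𝓝[≠] 0, ψ (χ z) = z) :
    ∃ᶠ z in 𝓝[≠] 0, (χ z).im ≠ 0 := by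
  have hnonconst : ¬∀ᶠ z in 𝓝 0, χ z = χ 0 := fun hconst => by
    obtain ⟨z, hz0, hz, hχz⟩ :=
      (eventually_mem_nhdsWithin.and (hψχ.and (nhdsWithin_le_nhds hconst))).exists
    exact hz0 (by rw [← hz, hχz, hχ0, hψ0]; rfl)
  rw [frequently_nhdsWithin_iff]
  refine (hχ.frequently_im_ne hnonconst).mono fun z hz => ⟨by simpa [hχ0] using hz, ?_⟩
  rintro rfl
  exact hz rfl

theorem eventually_comp_eq_div_of_eq_mul {φ ψ χ : ℂ → ℂ} {c : ℂ} (hc : c ≠ 0)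
    (hφ : AnalyticAt ℂ φ 0) (hψ0 : ψ 0 = 0) (hψφ : ∀ w : ℂ, w.im ≠ 0 → ψ w = c * φ w)
    (hχ : AnalyticAt ℂ χ 0) (hχ0 : χ 0 = 0) (hψχ : ∀ᶠ z in 𝓝[≠] 0, ψ (χ z) = z) :
    ∀ᶠ z in 𝓝 0, φ (χ z) = z / c := by
  have hdiff : AnalyticAt ℂ (fun z => φ (χ z) - z / c) 0 :=
    ((hχ0 ▸ hφ).comp hχ).sub (analyticAt_id.div_const)
  refine (hdiff.eventually_eq_zero_or_eventually_ne_zero.resolve_right fun hne => ?_).mono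
    fun z hz => sub_eq_zero.mp hz
  obtain ⟨z, him, hz, hψz⟩ :=
    ((frequently_im_ne_zero_of_rightInverse hχ hχ0 hψ0 hψχ).and_eventually (hne.and hψχ)).exists
  rw [hψφ _ him] at hψz
  exact hz (by rw [sub_eq_zero, eq_div_iff hc]; linear_combination hψz)

theorem HasStrictDerivAt.eventuallyEq_of_comp {𝕜 α : Type*} [NontriviallyNormedField 𝕜]
    [CompleteSpace 𝕜] {f : 𝕜 → 𝕜} {f' a : 𝕜} (hf : HasStrictDerivAt f f' a) (hf' : f' ≠ 0)
    {l : Filter α} {g₁ g₂ : α → 𝕜} (h₁ : Tendsto g₁ l (𝓝 a)) (h₂ : Tendsto g₂ l (𝓝 a))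
    (h : ∀ᶠ x in l, f (g₁ x) = f (g₂ x)) : g₁ =ᶠ[l] g₂ := by
  have hinv := hf.eventually_left_inverse hf'
  filter_upwards [h₁.eventually hinv, h₂.eventually hinv, h] with x hx₁ hx₂ hx
  rw [← hx₁, ← hx₂, hx]

/-- Let `μ` be a compactly supported probability measure on `ℝ` with
nonzero mean, `s > 0`, and let `μ_s = U_s μ` be a probability measure whose Cauchy
transform satisfies `G_{μ_s}(z) = s G_μ(z) + (1-s)/z`.  If `χ_μ` and `χ_{μ_s}` are the
local inverses at `0` of the moment series `ψ_μ` and `ψ_{μ_s}`, so that the S-transforms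
are `S_ν(z) = ((1+z)/z) χ_ν(z)`, then `S_{μ_s}(z) = ((1+z)/(s+z)) S_μ(z/s)` near `0`. -/
theorem stmt16 (μ μs : Measure ℝ) [IsProbabilityMeasure μ] [IsProbabilityMeasure μs]
    (K : Set ℝ) (hK : IsCompact K) (hsupp : μ Kᶜ = 0)
    (s : ℝ) (hs : 0 < s)
    (hG : ∀ z : ℂ, z.im ≠ 0 →
      ∫ x, (z - (x : ℂ))⁻¹ ∂μs = (s : ℂ) * ∫ x, (z - (x : ℂ))⁻¹ ∂μ + (1 - (s : ℂ)) / z)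
    (hmean : ∫ x, x ∂μ ≠ 0)
    (χμ χμs : ℂ → ℂ)
    (hχμ : AnalyticAt ℂ χμ 0) (hχμ0 : χμ 0 = 0)
    (hχμs : AnalyticAt ℂ χμs 0) (hχμs0 : χμs 0 = 0)
    (hinvμ : ∀ᶠ z in nhdsWithin (0 : ℂ) {(0 : ℂ)}ᶜ, momentSeries μ (χμ z) = z)
    (hinvμs : ∀ᶠ z in nhdsWithin (0 : ℂ) {(0 : ℂ)}ᶜ, momentSeries μs (χμs z) = z) :
    ∀ᶠ z in nhdsWithin (0 : ℂ) {(0 : ℂ)}ᶜ,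
      ((1 + z) / z) * χμs z =
        ((1 + z) / ((s : ℂ) + z)) * (((1 + z / (s : ℂ)) / (z / (s : ℂ))) * χμ (z / (s : ℂ))) := by
  have hs0 : (s : ℂ) ≠ 0 := Complex.ofReal_ne_zero.mpr hs.ne'
  obtain ⟨R, hR0, hR⟩ := exists_pos_ae_abs_le hK hsupp
  have hψχμs : ∀ᶠ z in 𝓝 0, momentSeries μ (χμs z) = z / s :=
    eventually_comp_eq_div_of_eq_mul hs0 (analyticAt_momentSeries_zero hR0 hR)
      (momentSeries_zero μs) (fun _ => momentSeries_eq_mul_of_cauchy_eq μ μs s hG) hχμs hχμs0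
      hinvμs
  have hdiv : Tendsto (fun z : ℂ => z / s) (𝓝[≠] 0) (𝓝[≠] 0) := by
    refine tendsto_nhdsWithin_iff.mpr ⟨?_, eventually_mem_nhdsWithin.mono fun z hz =>
      div_ne_zero hz hs0⟩
    simpa using ((continuous_id.div_const (s : ℂ)).tendsto 0).mono_left nhdsWithin_le_nhds
  have hχμs_lim : Tendsto χμs (𝓝[≠] 0) (𝓝 0) :=
    (hχμs0 ▸ hχμs.continuousAt.tendsto).mono_left nhdsWithin_le_nhds
  have hχμ_lim : Tendsto (fun z => χμ (z / s)) (𝓝[≠] 0) (𝓝 0) :=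
    (hχμ0 ▸ hχμ.continuousAt.tendsto).comp (hdiv.mono_right nhdsWithin_le_nhds)
  have hχ : χμs =ᶠ[𝓝[≠] 0] fun z => χμ (z / s) :=
    (hasStrictDerivAt_momentSeries_zero hR0 hR).eventuallyEq_of_comp
      (Complex.ofReal_ne_zero.mpr hmean) hχμs_lim hχμ_lim
      (by filter_upwards [nhdsWithin_le_nhds hψχμs, hdiv.eventually hinvμ] with z h₁ h₂
          using h₁.trans h₂.symm)
  have hsz : ∀ᶠ z in 𝓝 (0 : ℂ), (s : ℂ) + z ≠ 0 :=
    (continuousAt_const.add continuousAt_id).eventually_ne (by simpa using hs0)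
  filter_upwards [hχ, self_mem_nhdsWithin, nhdsWithin_le_nhds hsz] with z hz hz0 hsz
  rw [hz]
  field_simp [hz0]
end

section
/- The Marchenko–Pastur distribution $\varrho_t$ with shape parameter $t>0$ has $k$-th moment equal to the Narayana polynomial $N_k(t) = \sum_{j=1}^k \frac{1}{j}\binom{k-1}{j-1}\binom{k}{j-1} t^j$, i.e., $\int x^k\, d\varrho_t(x) = N_k(t)$ for all $k\geq 1$. -/
/-! The substitution `x = 1 + t + 2√t cos θ` turns the absolutely continuous part of `ϱ_t` into
`(2t/π) sin² θ dθ` on `[0, π]`; the atom at `0` does not see `x ^ k` for `k ≥ 1`. Since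
`1 + t + 2√t cos θ = |1 + √t e^{iθ}|²`, expanding the `n`-th power binomially and integrating
against `sin² θ` keeps only the frequencies `0` and `±2`, which leaves
`t (∑ C(n,p)² t^p - ∑ C(n,p) C(n,p+2) t^{p+1})`. Term by term this is the Narayana polynomial
`N_{n+1}(t)`, by the determinant formula for Narayana numbers. -/

open MeasureTheory

/-- The Marchenko–Pastur distribution with shape parameter `t`:
`ϱ_t = max{1-t,0} δ₀ + (√((x-a)(b-x)) / (2πx)) 1_{[a,b]}(x) dx`
with `a = (1-√t)²`, `b = (1+√t)²`. -/
noncomputable def mpMeasure (t : ℝ) : Measure ℝ :=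
  ENNReal.ofReal (max (1 - t) 0) • Measure.dirac 0 +
  volume.withDensity (fun x => ENNReal.ofReal (
    if (1 - Real.sqrt t) ^ 2 ≤ x ∧ x ≤ (1 + Real.sqrt t) ^ 2 then
      Real.sqrt ((x - (1 - Real.sqrt t) ^ 2) * ((1 + Real.sqrt t) ^ 2 - x)) /
        (2 * Real.pi * x)
    else 0))

open Real Finset

theorem integral_smul_dirac_add_of_eq_zero {α E : Type*} [MeasurableSpace α]
    [MeasurableSingletonClass α] [NormedAddCommGroup E] [NormedSpace ℝ E] [CompleteSpace E]
    {ν : Measure α} {c : ENNReal} (hc : c ≠ ⊤) {f : α → E} {a : α} (hf : f a = 0) :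
    ∫ x, f x ∂(c • Measure.dirac a + ν) = ∫ x, f x ∂ν := by
  have hδ : Integrable f (c • Measure.dirac a) := (integrable_dirac (by simp [hf])).smul_measure hc
  by_cases hν : Integrable f ν
  · rw [integral_add_measure hδ hν, MeasureTheory.integral_smul_measure, integral_dirac, hf,
      smul_zero, zero_add]
  · rw [integral_undef hν, integral_undef fun h => hν (h.mono_measure (Measure.le_add_left le_rfl))]

theorem integral_pow_succ_mpMeasure (t : ℝ) (k : ℕ) :
    ∫ x, x ^ (k + 1) ∂(mpMeasure t) = (∫ x in (1 - √t) ^ 2..(1 + √t) ^ 2,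
      x ^ k * √((x - (1 - √t) ^ 2) * ((1 + √t) ^ 2 - x))) / (2 * π) := by
  rw [mpMeasure]
  set a := (1 - √t) ^ 2
  set b := (1 + √t) ^ 2
  have ha : 0 ≤ a := sq_nonneg _
  have hab : a ≤ b := by nlinarith [sqrt_nonneg t]
  have hmeas : Measurable fun x => ENNReal.ofReal
      (if a ≤ x ∧ x ≤ b then √((x - a) * (b - x)) / (2 * π * x) else 0) :=
    (Measurable.ite measurableSet_Icc (by fun_prop) measurable_const).ennreal_ofReal
  rw [integral_smul_dirac_add_of_eq_zero ENNReal.ofReal_ne_top (zero_pow k.succ_ne_zero),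
    integral_withDensity_eq_integral_toReal_smul hmeas
      (Filter.Eventually.of_forall fun _ => ENNReal.ofReal_lt_top),
    intervalIntegral.integral_of_le hab, ← MeasureTheory.integral_div,
    ← integral_Icc_eq_integral_Ioc, ← integral_indicator measurableSet_Icc]
  refine integral_congr_ae ((Measure.ae_ne volume 0).mono fun x hx => ?_)
  dsimp only
  by_cases hx' : a ≤ x ∧ x ≤ b
  · have hx0 : 0 ≤ x := ha.trans hx'.1
    rw [if_pos hx', Set.indicator_of_mem (show x ∈ Set.Icc a b from hx'),
      ENNReal.toReal_ofReal (by positivity), smul_eq_mul, pow_succ]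
    field_simp
  · simp [hx']

theorem integral_mul_sqrt_eq_integral_comp_cos_mul_sin_sq {g : ℝ → ℝ} (hg : Continuous g)
    (c : ℝ) {r : ℝ} (hr : 0 ≤ r) :
    ∫ x in (c - r)..(c + r), g x * √((x - (c - r)) * (c + r - x)) =
      r ^ 2 * ∫ θ in 0..π, g (c + r * cos θ) * sin θ ^ 2 := by
  have hderiv : ∀ θ ∈ Set.uIcc 0 π, HasDerivAt (fun θ => c + r * cos θ) (-(r * sin θ)) θ :=
    fun θ _ => by simpa using ((hasDerivAt_cos θ).const_mul r).const_add c
  have hsub := intervalIntegral.integral_comp_mul_deriv hderiv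
    (by fun_prop : Continuous _).continuousOn
    (by fun_prop : Continuous fun x => g x * √((x - (c - r)) * (c + r - x)))
  simp only [cos_zero, cos_pi, mul_one, mul_neg, ← sub_eq_add_neg] at hsub
  rw [intervalIntegral.integral_symm, ← hsub, ← intervalIntegral.integral_neg,
    ← intervalIntegral.integral_const_mul]
  refine intervalIntegral.integral_congr fun θ hθ => ?_
  rw [Set.uIcc_of_le pi_pos.le] at hθ
  have hsqrt : √((c + r * cos θ - (c - r)) * (c + r - (c + r * cos θ))) = r * sin θ := by
    rw [show (c + r * cos θ - (c - r)) * (c + r - (c + r * cos θ)) = (r * sin θ) ^ 2 by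
      linear_combination (-r ^ 2) * sin_sq_add_cos_sq θ]
    exact sqrt_sq (mul_nonneg hr (sin_nonneg_of_nonneg_of_le_pi hθ.1 hθ.2))
  simp only [Function.comp_apply, hsqrt]
  ring

theorem one_add_sq_add_two_mul_cos_pow (n : ℕ) (u θ : ℝ) :
    (1 + u ^ 2 + 2 * u * cos θ) ^ n = ∑ p ∈ range (n + 1), ∑ q ∈ range (n + 1),
      (n.choose p * n.choose q * u ^ (p + q) : ℝ) * cos (((p - q : ℤ) : ℝ) * θ) := by
  set w := Complex.exp (θ * Complex.I)
  set w' := Complex.exp (-(θ : ℂ) * Complex.I)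
  have hfactor : ((1 + u ^ 2 + 2 * u * cos θ : ℝ) : ℂ) = (u * w + 1) * (u * w' + 1) := by
    have hww' : w * w' = 1 := by rw [← Complex.exp_add]; simp
    have hcos : 2 * Complex.cos θ = w + w' := Complex.two_cos θ
    push_cast
    linear_combination u * hcos - u ^ 2 * hww'
  have hexp (p q : ℕ) :
      w ^ p * w' ^ q = Complex.exp (((((p - q : ℤ) : ℝ) * θ : ℝ) : ℂ) * Complex.I) := by
    rw [← Complex.exp_nat_mul, ← Complex.exp_nat_mul, ← Complex.exp_add]
    push_cast
    ring_nf
  have hc : ((1 + u ^ 2 + 2 * u * cos θ : ℝ) : ℂ) ^ n = ∑ p ∈ range (n + 1), ∑ q ∈ range (n + 1),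
      ((n.choose p * n.choose q * u ^ (p + q) : ℝ) : ℂ) *
        Complex.exp (((((p - q : ℤ) : ℝ) * θ : ℝ) : ℂ) * Complex.I) := by
    rw [hfactor, mul_pow, add_pow, add_pow, sum_mul_sum]
    refine sum_congr rfl fun p _ => sum_congr rfl fun q _ => ?_
    rw [← hexp]
    push_cast
    ring
  simpa only [← Complex.ofReal_pow, Complex.ofReal_re, Complex.re_sum, Complex.re_ofReal_mul,
    Complex.exp_ofReal_mul_I_re] using congrArg Complex.re hc

theorem integral_cos_int_mul (m : ℤ) : ∫ θ in 0..π, cos (m * θ) = if m = 0 then π else 0 := by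
  split_ifs with hm
  · simp [hm]
  · have hm' : (m : ℝ) ≠ 0 := Int.cast_ne_zero.mpr hm
    rw [intervalIntegral.integral_comp_mul_left (fun θ => cos θ) hm', integral_cos]
    simp [Real.sin_int_mul_pi]

theorem integral_cos_int_mul_mul_sin_sq (m : ℤ) :
    ∫ θ in 0..π, cos (m * θ) * sin θ ^ 2 =
      (if m = 0 then π / 2 else 0) - (if m = -2 then π / 4 else 0) -
        (if m = 2 then π / 4 else 0) := by
  have hprod (θ : ℝ) : cos (m * θ) * sin θ ^ 2 =
      1 / 2 * cos (m * θ) - 1 / 4 * cos (((m + 2 : ℤ) : ℝ) * θ) -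
        1 / 4 * cos (((m - 2 : ℤ) : ℝ) * θ) := by
    push_cast
    simp only [add_mul, sub_mul, cos_add, cos_sub, cos_two_mul, sin_two_mul, sin_sq]
    ring_nf
  simp only [hprod]
  rw [intervalIntegral.integral_sub, intervalIntegral.integral_sub,
    intervalIntegral.integral_const_mul, intervalIntegral.integral_const_mul,
    intervalIntegral.integral_const_mul, integral_cos_int_mul, integral_cos_int_mul,
    integral_cos_int_mul]
  · simp only [add_eq_zero_iff_eq_neg, sub_eq_zero]
    split_ifs <;> ring
  all_goals exact Continuous.intervalIntegrable (by fun_prop) _ _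

theorem integral_one_add_sq_add_two_mul_cos_pow_mul_sin_sq (n : ℕ) (u : ℝ) :
    ∫ θ in 0..π, (1 + u ^ 2 + 2 * u * cos θ) ^ n * sin θ ^ 2 =
      π / 2 * (∑ p ∈ range (n + 1), (n.choose p : ℝ) ^ 2 * (u ^ 2) ^ p -
        ∑ p ∈ range (n + 1), (n.choose p * n.choose (p + 2) : ℝ) * (u ^ 2) ^ (p + 1)) := by
  set c : ℕ → ℕ → ℝ := fun p q => n.choose p * n.choose q * u ^ (p + q)
  have hterm (p q : ℕ) : ∫ θ in 0..π, c p q * cos (((p - q : ℤ) : ℝ) * θ) * sin θ ^ 2 =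
      (if q = p then c p q * (π / 2) else 0) - (if q = p + 2 then c p q * (π / 4) else 0) -
        (if p = q + 2 then c p q * (π / 4) else 0) := by
    have e₀ : (p - q : ℤ) = 0 ↔ q = p := by omega
    have e₁ : (p - q : ℤ) = -2 ↔ q = p + 2 := by omega
    have e₂ : (p - q : ℤ) = 2 ↔ p = q + 2 := by omega
    simp_rw [mul_assoc, intervalIntegral.integral_const_mul, integral_cos_int_mul_mul_sin_sq,
      e₀, e₁, e₂, mul_sub, mul_ite, mul_zero]
  have hcont (p q : ℕ) : Continuous fun θ => c p q * cos (((p - q : ℤ) : ℝ) * θ) * sin θ ^ 2 := by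
    fun_prop
  simp_rw [one_add_sq_add_two_mul_cos_pow, sum_mul]
  rw [intervalIntegral.integral_finsetSum fun p _ =>
    (continuous_finsetSum _ fun q _ => hcont p q).intervalIntegrable _ _]
  simp_rw [intervalIntegral.integral_finsetSum fun q _ => (hcont _ q).intervalIntegrable _ _,
    hterm, sum_sub_distrib]
  rw [sum_comm (f := fun p q => if p = q + 2 then _ else _)]
  simp_rw [sum_ite_eq']
  rw [sub_sub, ← sum_add_distrib, ← sum_sub_distrib, mul_sub, mul_sum, mul_sum, ← sum_sub_distrib]
  refine sum_congr rfl fun p hp => ?_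
  have hchoose : p + 2 ∉ range (n + 1) → (n.choose (p + 2) : ℝ) = 0 := fun h => by
    rw [Nat.choose_eq_zero_of_lt (by simpa using h), Nat.cast_zero]
  rw [if_pos hp]
  split_ifs with h
  · simp only [c]
    ring
  · simp only [c, hchoose h]
    ring

/- The Narayana number `C(n, p+1) C(n+1, p+1) / (p+2)` as the determinant
`C(n, p+1)² - C(n, p) C(n, p+2)`. -/
theorem add_two_mul_choose_sq_sub_choose_mul_choose {R : Type*} [CommRing R] (n p : ℕ) :
    ((p : R) + 2) * ((n.choose (p + 1) : R) ^ 2 - n.choose p * n.choose (p + 2)) =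
      n.choose (p + 1) * (n + 1).choose (p + 1) := by
  have h₁ := congrArg ((↑) : ℕ → R) (Nat.add_one_mul_choose_eq n p)
  have h₂ := congrArg ((↑) : ℕ → R) (Nat.add_one_mul_choose_eq n (p + 1))
  have h₃ := congrArg ((↑) : ℕ → R) (Nat.choose_succ_succ' n p)
  have h₄ := congrArg ((↑) : ℕ → R) (Nat.choose_succ_succ' n (p + 1))
  push_cast at h₁ h₂ h₃ h₄
  linear_combination (-(n.choose (p + 1) : R)) * h₁ + (n.choose p : R) * h₂
    - (n.choose (p + 1) : R) * (p + 2) * h₃ + (n.choose p : R) * (p + 2) * h₄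

theorem mul_sum_choose_sq_sub_eq_sum_narayana {K : Type*} [Field K] [CharZero K] (n : ℕ) (x : K) :
    x * (∑ p ∈ range (n + 1), (n.choose p : K) ^ 2 * x ^ p -
        ∑ p ∈ range (n + 1), (n.choose p * n.choose (p + 2) : K) * x ^ (p + 1)) =
      ∑ j ∈ Icc 1 (n + 1), ((n.choose (j - 1) * (n + 1).choose (j - 1) : ℕ) : K) / j * x ^ j := by
  rw [← Ico_add_one_right_eq_Icc, sum_Ico_eq_sum_range, Nat.add_sub_cancel, mul_sub, mul_sum,
    mul_sum, sum_range_succ' _ n, sum_range_succ _ n, sum_range_succ' _ n,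
    Nat.choose_eq_zero_of_lt (by omega : n < n + 2)]
  have key (p : ℕ) : x * ((n.choose (p + 1) : K) ^ 2 * x ^ (p + 1)) -
      x * ((n.choose p * n.choose (p + 2) : K) * x ^ (p + 1)) =
      ((n.choose (1 + (p + 1) - 1) * (n + 1).choose (1 + (p + 1) - 1) : ℕ) : K) /
        ((1 + (p + 1) : ℕ) : K) * x ^ (1 + (p + 1)) := by
    have hp : (p : K) + 2 ≠ 0 := by exact_mod_cast (Nat.succ_ne_zero (p + 1))
    rw [show 1 + (p + 1) - 1 = p + 1 by omega, show 1 + (p + 1) = p + 2 by omega]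
    push_cast
    rw [div_mul_eq_mul_div, eq_div_iff hp]
    linear_combination x ^ (p + 2) * add_two_mul_choose_sq_sub_choose_mul_choose (R := K) n p
  simp only [Nat.cast_zero, mul_zero, zero_mul, add_zero]
  rw [add_sub_right_comm, ← sum_sub_distrib, sum_congr rfl fun p _ => key p]
  simp

/-- The `k`-th moment of the Marchenko–Pastur distribution `ϱ_t` is the
Narayana polynomial `N_k(t) = ∑_{j=1}^k (1/j) C(k-1,j-1) C(k,j-1) t^j`. -/
theorem stmt18 (t : ℝ) (ht : 0 < t) (k : ℕ) (hk : 1 ≤ k) :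
    ∫ x, x ^ k ∂(mpMeasure t) =
      ∑ j ∈ Finset.Icc 1 k,
        ((((k - 1).choose (j - 1) * k.choose (j - 1) : ℕ) : ℝ) / (j : ℝ)) * t ^ j := by
  obtain ⟨n, rfl⟩ := Nat.exists_eq_add_of_le' hk
  set u := √t
  have hu : u ^ 2 = t := sq_sqrt ht.le
  rw [integral_pow_succ_mpMeasure, show (1 - u) ^ 2 = 1 + u ^ 2 - 2 * u by ring,
    show (1 + u) ^ 2 = 1 + u ^ 2 + 2 * u by ring,
    integral_mul_sqrt_eq_integral_comp_cos_mul_sin_sq (continuous_pow n) _ (by positivity),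
    integral_one_add_sq_add_two_mul_cos_pow_mul_sin_sq, mul_pow, hu, Nat.add_sub_cancel,
    ← mul_sum_choose_sq_sub_eq_sum_narayana]
  field_simp
end
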